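/- arXiv:2301.01540 — 8 statements merged into one kernel-verified Lean document; each statement's English description precedes it below -/
import Mathlib

section
/- Let ℓ be a positive even integer and let λ₁, …, λ_ℓ be nonzero real numbers. Define B(ℓ, λ_{1:ℓ}) = (1/ℓ!) Σ_{p ∈ Sym(ℓ)} Σ_{m,n even ≥ 0, m+n = ℓ} [(m/2)! (n/2)!]^{-1} (−1)^{n/2} Π_{k=ℓ−n+1}^{ℓ} sgn(λ_{p(k)}). Let N be the number of indices k with λ_k < 0. Then B(ℓ, λ_{1:ℓ}) = 2^ℓ · (ℓ/2)! / ℓ! if N = ℓ/2, and B(ℓ, λ_{1:ℓ}) = 0 if N ≠ ℓ/2. -/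
/-!
Summing over permutations, the product of the signs `ε k` over a set of `n` indices becomes
`n! (ℓ - n)! eₙ(ε)`, with `eₙ` the elementary symmetric function; with `P` positive and `N`
negative signs, `eₙ(ε)` is the coefficient of `Xⁿ` in `(1 + X)^P (1 - X)^N`. Writing `ℓ = 2L`,
`ℓ! B` is the pairing `∑ⱼ (-1)ʲ ((2j)!/j!) ((2L-2j)!/(L-j)!) [X^{2j}] f` of that polynomial `f`.
Since `(1 + X)(1 - X) = 1 - X²`, adding one sign of each kind multiplies the pairing by `4L`, and
when all signs agree it collapses to `(2L)!/L! · ∑ⱼ (-1)ʲ C(L, j)`, which vanishes unless `L = 0`.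
For independent standard Gaussians `W, Z` the pairing is `2^L 𝔼[(W + iZ)^P (W - iZ)^N]`, which
explains the answer.
-/

open Finset Polynomial Equiv
open scoped Nat

section PermutationAverage

variable {α R : Type*} [Fintype α]

theorem sum_powersetCard_prod_comp_perm [CommSemiring R] (f : α → R) (n : ℕ) (p : Perm α) :
    ∑ T ∈ powersetCard n univ, ∏ k ∈ T, f (p k) = ∑ T ∈ powersetCard n univ, ∏ k ∈ T, f k := by
  have hp : univ.val.map p = (univ : Finset α).val := congrArg Finset.val (map_univ_equiv p)
  rw [← esymm_map_val, ← esymm_map_val]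
  change (univ.val.map (f ∘ p)).esymm n = _
  rw [← Multiset.map_map, hp]

variable [DecidableEq α]

theorem sum_perm_prod_map_eq [CommSemiring R] (f : α → R) (S : Finset α) (σ : Perm α) :
    ∑ p : Perm α, ∏ k ∈ S.map σ.toEmbedding, f (p k) = ∑ p : Perm α, ∏ k ∈ S, f (p k) := by
  simp only [prod_map, Equiv.toEmbedding_apply]
  exact Fintype.sum_equiv (Equiv.mulRight σ) _ _ fun p => rfl

theorem sum_perm_prod_eq_of_card_eq [CommSemiring R] (f : α → R) {S T : Finset α}
    (h : #S = #T) :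
    ∑ p : Perm α, ∏ k ∈ S, f (p k) = ∑ p : Perm α, ∏ k ∈ T, f (p k) := by
  obtain ⟨σ, rfl⟩ := Perm.exists_map_finset_eq S T h
  exact (sum_perm_prod_map_eq f S σ).symm

theorem sum_perm_prod_eq_sum_powersetCard [Field R] [CharZero R] (f : α → R) (S : Finset α) :
    ∑ p : Perm α, ∏ k ∈ S, f (p k)
      = (#S)! * (Fintype.card α - #S)! * ∑ T ∈ powersetCard #S univ, ∏ k ∈ T, f k := by
  have hS : #S ≤ Fintype.card α := card_le_univ S
  -- the left side depends only on `#S`, so summing it over all `T` with `#T = #S` and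
  -- exchanging the two sums gives `(card α)!` times the elementary symmetric function
  have key : ((Fintype.card α).choose #S : R) * ∑ p : Perm α, ∏ k ∈ S, f (p k)
      = (Fintype.card α)! * ∑ T ∈ powersetCard #S univ, ∏ k ∈ T, f k := by
    calc _ = ∑ T ∈ powersetCard #S univ, ∑ p : Perm α, ∏ k ∈ S, f (p k) := by
          rw [sum_const, card_powersetCard, card_univ, nsmul_eq_mul]
      _ = ∑ T ∈ powersetCard #S univ, ∑ p : Perm α, ∏ k ∈ T, f (p k) :=
          sum_congr rfl fun T hT => sum_perm_prod_eq_of_card_eq f (mem_powersetCard_univ.1 hT).symm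
      _ = ∑ p : Perm α, ∑ T ∈ powersetCard #S univ, ∏ k ∈ T, f k := by
          rw [sum_comm]; simp only [sum_powersetCard_prod_comp_perm]
      _ = _ := by rw [sum_const, card_univ, Fintype.card_perm, nsmul_eq_mul]
  have hC : ((Fintype.card α).choose #S : R) ≠ 0 := Nat.cast_ne_zero.2 (Nat.choose_pos hS).ne'
  apply mul_left_cancel₀ hC
  rw [key, ← Nat.choose_mul_factorial_mul_factorial hS]
  push_cast
  ring

end PermutationAverage

theorem coeff_prod_one_add_C_mul_X {α R : Type*} [CommSemiring R] (s : Finset α) (f : α → R)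
    (n : ℕ) : (∏ k ∈ s, (1 + C (f k) * X)).coeff n = ∑ T ∈ powersetCard n s, ∏ k ∈ T, f k := by
  classical
  simp_rw [add_comm (1 : R[X]), prod_add, prod_const_one, mul_one, prod_mul_distrib, prod_const,
    ← map_prod, finsetSum_coeff, coeff_C_mul_X_pow]
  rw [powersetCard_eq_filter, sum_filter]
  exact sum_congr rfl fun T _ => by simp only [eq_comm]

theorem prod_one_add_sign_mul_X {α R : Type*} [Fintype α] [DecidableEq α] [CommRing R]
    (s : Finset α) :
    ∏ k, (1 + C (if k ∈ s then -1 else 1 : R) * X) = (1 + X) ^ #sᶜ * (1 - X) ^ #s := by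
  have h : ∀ k, (1 + C (if k ∈ s then -1 else 1 : R) * X) = if k ∈ s then 1 - X else 1 + X := by
    intro k; split_ifs <;> simp [sub_eq_add_neg]
  rw [prod_congr rfl fun k _ => h k, prod_ite, prod_const, prod_const, mul_comm]
  simp [filter_notMem_eq_sdiff, compl_eq_univ_sdiff]

theorem coeff_one_sub_X_pow {R : Type*} [CommRing R] (m k : ℕ) :
    ((1 - X : R[X]) ^ m).coeff k = (-1) ^ k * m.choose k := by
  have : (1 - X : R[X]) ^ m = ((1 + X) ^ m).comp (C (-1) * X) := by simp [sub_eq_add_neg]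
  rw [this, comp_C_mul_X_coeff, coeff_one_add_X_pow, mul_comm]

namespace Nat

theorem descFactorial_two_mul_succ (j : ℕ) :
    (2 * (j + 1)).descFactorial (j + 1) = 2 * (2 * j + 1) * (2 * j).descFactorial j := by
  have h₁ := succ_descFactorial_succ (2 * j + 1) j
  have h₂ := succ_descFactorial (2 * j) j
  rw [show 2 * j + 1 - j = j + 1 by omega] at h₂
  rw [show 2 * (j + 1) = 2 * j + 1 + 1 by ring, h₁]
  nlinarith

theorem factorial_mul_descFactorial_two_mul (j : ℕ) : j ! * (2 * j).descFactorial j = (2 * j)! := by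
  simpa [two_mul] using factorial_mul_descFactorial (show j ≤ 2 * j by omega)

theorem descFactorial_two_mul_mul_descFactorial_two_mul_mul_choose {L j : ℕ} (hj : j ≤ L) :
    (2 * j).descFactorial j * (2 * (L - j)).descFactorial (L - j) * (2 * L).choose (2 * j)
      = (2 * L).descFactorial L * L.choose j := by
  apply Nat.eq_of_mul_eq_mul_left (Nat.mul_pos (factorial_pos j) (factorial_pos (L - j)))
  calc j ! * (L - j)! * ((2 * j).descFactorial j * (2 * (L - j)).descFactorial (L - j)
          * (2 * L).choose (2 * j))
      = (2 * L).choose (2 * j) * (j ! * (2 * j).descFactorial j)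
          * ((L - j)! * (2 * (L - j)).descFactorial (L - j)) := by ring
    _ = (2 * L).choose (2 * j) * (2 * j)! * (2 * L - 2 * j)! := by
        rw [factorial_mul_descFactorial_two_mul, factorial_mul_descFactorial_two_mul, Nat.mul_sub]
    _ = L ! * (2 * L).descFactorial L := by
        rw [choose_mul_factorial_mul_factorial (by omega), factorial_mul_descFactorial_two_mul]
    _ = j ! * (L - j)! * ((2 * L).descFactorial L * L.choose j) := by
        rw [← choose_mul_factorial_mul_factorial hj]; ring

theorem descFactorial_two_mul_add_descFactorial_two_mul_succ {L j : ℕ} (hj : j ≤ L) :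
    (2 * j).descFactorial j * (2 * (L + 1 - j)).descFactorial (L + 1 - j)
      + (2 * (j + 1)).descFactorial (j + 1) * (2 * (L - j)).descFactorial (L - j)
      = (4 * L + 4) * ((2 * j).descFactorial j * (2 * (L - j)).descFactorial (L - j)) := by
  obtain ⟨m, rfl⟩ := Nat.exists_eq_add_of_le hj
  rw [show j + m + 1 - j = m + 1 by omega, Nat.add_sub_cancel_left, descFactorial_two_mul_succ,
    descFactorial_two_mul_succ]
  ring

end Nat

section EvenCoeffPairing

variable {R : Type*} [CommRing R]

noncomputable def evenCoeffPairing (L : ℕ) (f : R[X]) : R :=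
  ∑ j ∈ range (L + 1),
    (-1) ^ j * (2 * j).descFactorial j * (2 * (L - j)).descFactorial (L - j) * f.coeff (2 * j)

theorem evenCoeffPairing_of_coeff_eq_choose {L : ℕ} {f : R[X]}
    (hf : ∀ j ≤ L, f.coeff (2 * j) = (2 * L).choose (2 * j)) :
    evenCoeffPairing L f = if L = 0 then 1 else 0 := by
  have hterm : ∀ j ∈ range (L + 1),
      (-1) ^ j * (2 * j).descFactorial j * (2 * (L - j)).descFactorial (L - j) * f.coeff (2 * j)
        = ((2 * L).descFactorial L : R) * ((-1) ^ j * L.choose j) := by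
    intro j hj
    have hjL := Nat.lt_succ_iff.1 (mem_range.1 hj)
    have := congrArg (Nat.cast : ℕ → R)
      (Nat.descFactorial_two_mul_mul_descFactorial_two_mul_mul_choose hjL)
    push_cast at this
    rw [hf j hjL]
    linear_combination (-1) ^ j * this
  have halt := congrArg (Int.cast : ℤ → R) (Int.alternating_sum_range_choose (n := L))
  push_cast at halt
  rw [evenCoeffPairing, sum_congr rfl hterm, ← mul_sum, halt]
  split_ifs with hL <;> simp [hL]

theorem evenCoeffPairing_one_sub_X_sq_mul {L : ℕ} {f : R[X]} (hf : f.natDegree ≤ 2 * L + 1) :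
    evenCoeffPairing (L + 1) ((1 - X ^ 2) * f) = (4 * L + 4) * evenCoeffPairing L f := by
  have htop : f.coeff (2 * (L + 1)) = 0 := coeff_eq_zero_of_natDegree_lt (by omega)
  have hshift : ∀ j, (X ^ 2 * f).coeff (2 * (j + 1)) = f.coeff (2 * j) := fun j => by
    rw [mul_add, mul_one, coeff_X_pow_mul]
  have hzero : (X ^ 2 * f).coeff 0 = 0 := by simp
  simp only [evenCoeffPairing, sub_mul, one_mul, coeff_sub, mul_sub, sum_sub_distrib]
  rw [sum_range_succ _ (L + 1), htop, mul_zero, add_zero, sum_range_succ' _ (L + 1)]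
  simp only [hshift, mul_zero, hzero, add_zero, Nat.add_sub_add_right]
  rw [mul_sum, ← sum_sub_distrib]
  refine sum_congr rfl fun j hj => ?_
  have := congrArg (Nat.cast : ℕ → R)
    (Nat.descFactorial_two_mul_add_descFactorial_two_mul_succ (Nat.lt_succ_iff.1 (mem_range.1 hj)))
  push_cast at this
  linear_combination (-1) ^ j * f.coeff (2 * j) * this

theorem evenCoeffPairing_one_add_X_pow_mul_one_sub_X_pow {P N L : ℕ} (h : P + N = 2 * L) :
    evenCoeffPairing L ((1 + X : R[X]) ^ P * (1 - X) ^ N)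
      = if P = N then (4 ^ L * L ! : R) else 0 := by
  induction L generalizing P N with
  | zero =>
    obtain ⟨rfl, rfl⟩ : P = 0 ∧ N = 0 := by omega
    simp [evenCoeffPairing]
  | succ L ih =>
    rcases P with _ | P
    · rw [if_neg (by omega), pow_zero, one_mul, evenCoeffPairing_of_coeff_eq_choose,
        if_neg (by omega)]
      intro j _
      rw [coeff_one_sub_X_pow, ← h, zero_add, pow_mul, neg_one_sq, one_pow, one_mul]
    rcases N with _ | N
    · rw [if_neg (by omega), pow_zero, mul_one, evenCoeffPairing_of_coeff_eq_choose,
        if_neg (by omega)]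
      intro j _
      rw [coeff_one_add_X_pow, ← h, add_zero]
    have hdeg : ((1 + X : R[X]) ^ P * (1 - X) ^ N).natDegree ≤ 2 * L + 1 := by
      compute_degree; omega
    have hfactor : (1 + X : R[X]) ^ (P + 1) * (1 - X) ^ (N + 1)
        = (1 - X ^ 2) * ((1 + X) ^ P * (1 - X) ^ N) := by ring
    rw [hfactor, evenCoeffPairing_one_sub_X_sq_mul hdeg, ih (by omega)]
    simp only [Nat.add_right_cancel_iff]
    split_ifs
    · rw [Nat.factorial_succ]; push_cast; ring
    · rw [mul_zero]

end EvenCoeffPairing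

theorem Fin.card_filter_sub_le_val {m n : ℕ} (h : n ≤ m) : #{k : Fin m | m - n ≤ (k : ℕ)} = n := by
  have := card_filter_add_card_filter_not (s := univ) (fun k : Fin m => (k : ℕ) < m - n)
  simp only [not_lt, Fin.card_filter_val_lt, card_univ, Fintype.card_fin] at this
  omega

theorem filter_even_range_two_mul_add_one (L : ℕ) :
    (range (2 * L + 1)).filter (fun n => Even n)
      = (range (L + 1)).map ⟨(2 * ·), mul_right_injective₀ two_ne_zero⟩ := by
  ext n
  simp only [mem_filter, mem_range, mem_map, Function.Embedding.coeFn_mk]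
  constructor
  · rintro ⟨hn, j, rfl⟩
    exact ⟨j, by omega, by omega⟩
  · rintro ⟨j, hj, rfl⟩
    exact ⟨by omega, even_two_mul j⟩

theorem sum_perm_even_weighted_prod_eq_evenCoeffPairing {R : Type*} [Field R] [CharZero R]
    (L : ℕ) (f : Fin (2 * L) → R) :
    ∑ p : Perm (Fin (2 * L)), ∑ n ∈ (range (2 * L + 1)).filter (fun n => Even n),
        (((2 * L - n) / 2)! * (n / 2)! : R)⁻¹ * (-1) ^ (n / 2) *
          ∏ k ∈ univ.filter (fun k : Fin (2 * L) => 2 * L - n ≤ (k : ℕ)), f (p k)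
      = evenCoeffPairing L (∏ k, (1 + C (f k) * X)) := by
  rw [sum_comm, filter_even_range_two_mul_add_one, sum_map, evenCoeffPairing]
  refine sum_congr rfl fun j hj => ?_
  have hj : j ≤ L := Nat.lt_succ_iff.1 (mem_range.1 hj)
  simp only [Function.Embedding.coeFn_mk]
  rw [← mul_sum, sum_perm_prod_eq_sum_powersetCard, Fin.card_filter_sub_le_val (by omega),
    coeff_prod_one_add_C_mul_X, Fintype.card_fin, ← Nat.mul_sub, Nat.mul_div_cancel_left _ two_pos,
    Nat.mul_div_cancel_left _ two_pos, ← Nat.factorial_mul_descFactorial_two_mul,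
    ← Nat.factorial_mul_descFactorial_two_mul]
  have := Nat.factorial_ne_zero j
  have := Nat.factorial_ne_zero (L - j)
  push_cast
  field_simp

theorem stmt1_general (ℓ : ℕ) (hev : Even ℓ) (lam : Fin ℓ → ℝ)
    (hlam : ∀ k, lam k ≠ 0) :
    (1 / (Nat.factorial ℓ : ℝ)) *
      ∑ p : Equiv.Perm (Fin ℓ),
        ∑ n ∈ (Finset.range (ℓ + 1)).filter (fun n => Even n),
          ((Nat.factorial ((ℓ - n) / 2) : ℝ) * (Nat.factorial (n / 2) : ℝ))⁻¹ *
            (-1) ^ (n / 2) *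
            ∏ k ∈ Finset.univ.filter (fun k : Fin ℓ => ℓ - n ≤ (k : ℕ)),
              Real.sign (lam (p k)) =
      (if (Finset.univ.filter (fun k : Fin ℓ => lam k < 0)).card = ℓ / 2 then
        2 ^ ℓ * (Nat.factorial (ℓ / 2) : ℝ) / (Nat.factorial ℓ : ℝ)
      else 0) := by
  obtain ⟨L, rfl⟩ := even_iff_two_dvd.1 hev
  set s := univ.filter fun k : Fin (2 * L) => lam k < 0
  have hsign : ∀ k, Real.sign (lam k) = if k ∈ s then -1 else 1 := fun k => by
    by_cases h : lam k < 0
    · simp [s, h, Real.sign_of_neg]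
    · simp [s, h, Real.sign_of_pos (lt_of_le_of_ne (not_lt.1 h) (hlam k).symm)]
  have hs : #s ≤ 2 * L := by simpa using card_le_univ s
  simp only [hsign]
  rw [sum_perm_even_weighted_prod_eq_evenCoeffPairing L fun k => if k ∈ s then -1 else 1,
    prod_one_add_sign_mul_X,
    evenCoeffPairing_one_add_X_pow_mul_one_sub_X_pow (by rw [card_compl, Fintype.card_fin]; omega)]
  have hhalf : #sᶜ = #s ↔ #s = 2 * L / 2 := by rw [card_compl, Fintype.card_fin]; omega
  simp only [hhalf, Nat.mul_div_cancel_left _ two_pos]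
  split_ifs
  · rw [pow_mul]; field_simp; norm_num
  · rw [mul_zero]

/-- Lemma 2 of the paper: the weighted sum of products of sign functions equals
`2^ℓ (ℓ/2)! / ℓ!` when exactly half of the `λ_k` are negative, and `0` otherwise.
Indices are 0-based: the product over `k = ℓ-n+1, …, ℓ` (1-based) becomes the product over
the last `n` indices, i.e. those `k : Fin ℓ` with `ℓ - n ≤ k`. -/
theorem stmt1 (ℓ : ℕ) (hℓ : 0 < ℓ) (hev : Even ℓ) (lam : Fin ℓ → ℝ)
    (hlam : ∀ k, lam k ≠ 0) :
    (1 / (Nat.factorial ℓ : ℝ)) *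
      ∑ p : Equiv.Perm (Fin ℓ),
        ∑ n ∈ (Finset.range (ℓ + 1)).filter (fun n => Even n),
          ((Nat.factorial ((ℓ - n) / 2) : ℝ) * (Nat.factorial (n / 2) : ℝ))⁻¹ *
            (-1) ^ (n / 2) *
            ∏ k ∈ Finset.univ.filter (fun k : Fin ℓ => ℓ - n ≤ (k : ℕ)),
              Real.sign (lam (p k)) =
      (if (Finset.univ.filter (fun k : Fin ℓ => lam k < 0)).card = ℓ / 2 then
        2 ^ ℓ * (Nat.factorial (ℓ / 2) : ℝ) / (Nat.factorial ℓ : ℝ)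
      else 0) :=
  stmt1_general ℓ hev lam hlam
end

section
/- Let ℓ ≥ 2 be an even integer and let h be an integer with 0 ≤ h < ℓ/2. Then Σ_{n even, 0 ≤ n ≤ ℓ−h} (−1)^{n/2} · [n! (ℓ−n)! / ((n/2)! ((ℓ−n)/2)!)] · binom(ℓ−h, n) = 0. -/
/-!
Write `ℓ = 2c` and `n = 2(c - j)`. Since `C(ℓ-h, n) = 0` for `n > ℓ - h`, the sum may run
over all even `n ≤ ℓ`, and then the summand is
`(ℓ-h)!/c! · (-1)^(c-j) C(c, j) · (2j)(2j-1)⋯(2j-h+1)`.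
Hence the sum is `(ℓ-h)!/c!` times the `c`-th forward difference at `0` of the falling factorial
`j ↦ (2j)(2j-1)⋯(2j-h+1)`, a polynomial of degree `h < c`, so it vanishes.
-/

open Finset Polynomial Nat

theorem Polynomial.sum_range_alternating_choose_mul_eval_eq_zero {R : Type*} [CommRing R]
    {P : R[X]} {n : ℕ} (hP : P.natDegree < n) :
    ∑ k ∈ range (n + 1), (-1 : R) ^ (n - k) * n.choose k * P.eval (k : R) = 0 := by
  simpa [fwdDiff_iter_eq_sum_shift, zsmul_eq_mul] using
    congrFun (fwdDiff_iter_eq_zero_of_degree_lt hP) 0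

theorem Nat.sum_range_alternating_choose_mul_descFactorial_mul_eq_zero (a : ℕ) {h n : ℕ}
    (hn : h < n) :
    ∑ k ∈ range (n + 1), (-1 : ℤ) ^ (n - k) * n.choose k * (a * k).descFactorial h = 0 := by
  have hdeg : ((descPochhammer ℤ h).comp ((a : ℤ[X]) * X)).natDegree < n := by
    have : ((a : ℤ[X]) * X).natDegree ≤ 1 := by compute_degree
    calc _ ≤ h * ((a : ℤ[X]) * X).natDegree := by
          simpa using natDegree_comp_le (p := descPochhammer ℤ h)
      _ ≤ h * 1 := Nat.mul_le_mul_left h this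
      _ < n := by simpa using hn
  simpa [← descPochhammer_eval_eq_descFactorial] using
    sum_range_alternating_choose_mul_eval_eq_zero hdeg

theorem Nat.choose_mul_factorial_mul_factorial_add_sub {n h m : ℕ} (hm : m ≤ n + h) :
    n.choose m * m ! * (n + h - m)! = n ! * (n + h - m).descFactorial h := by
  rcases le_or_gt m n with hmn | hnm
  · rw [← factorial_mul_descFactorial (by omega : h ≤ n + h - m),
      show n + h - m - h = n - m by omega, ← mul_assoc, choose_mul_factorial_mul_factorial hmn]
  · rw [choose_eq_zero_of_lt hnm, descFactorial_eq_zero_iff_lt.mpr (by omega)]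
    simp

theorem factorial_mul_factorial_div_mul_choose_eq {L h c j : ℕ} (hL : L + h = 2 * c)
    (hj : j ≤ c) :
    ((2 * (c - j))! * (2 * j)! / ((c - j)! * j !) : ℝ) * L.choose (2 * (c - j)) =
      L ! / c ! * c.choose j * (2 * j).descFactorial h := by
  have h1 := Nat.choose_mul_factorial_mul_factorial_add_sub (n := L) (h := h) (m := 2 * (c - j))
    (by omega)
  rw [show L + h - 2 * (c - j) = 2 * j by omega] at h1
  have h2 := choose_mul_factorial_mul_factorial hj
  rw [← Nat.cast_inj (R := ℝ)] at h1 h2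
  push_cast at h1 h2
  field_simp
  linear_combination (c ! : ℝ) * h1 - (L ! * (2 * j).descFactorial h : ℝ) * h2

theorem Finset.sum_filter_even_range {M : Type*} [AddCommMonoid M] (f : ℕ → M) (c : ℕ) :
    ∑ n ∈ (range (2 * c + 1)).filter Even, f n = ∑ k ∈ range (c + 1), f (2 * k) := by
  refine (sum_nbij' (2 * ·) (· / 2) ?_ ?_ ?_ ?_ fun _ _ => rfl).symm <;>
    intro x hx <;> simp [Nat.even_iff] at hx ⊢ <;> omega

theorem stmt3_general (ℓ h : ℕ) (hev : Even ℓ) (hh : h < ℓ / 2) :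
    ∑ n ∈ (Finset.range (ℓ - h + 1)).filter (fun n => Even n),
      (-1 : ℝ) ^ (n / 2) *
        ((Nat.factorial n : ℝ) * (Nat.factorial (ℓ - n) : ℝ) /
          ((Nat.factorial (n / 2) : ℝ) * (Nat.factorial ((ℓ - n) / 2) : ℝ))) *
        ((ℓ - h).choose n : ℝ) = 0 := by
  obtain ⟨c, rfl⟩ := hev
  rw [← two_mul] at hh ⊢
  have hc : h < c := by omega
  have hdiff : ∑ j ∈ range (c + 1),
      (-1 : ℝ) ^ (c - j) * c.choose j * (2 * j).descFactorial h = 0 := by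
    exact_mod_cast Nat.sum_range_alternating_choose_mul_descFactorial_mul_eq_zero 2 hc
  have hsub : 2 * c - h + 1 ≤ 2 * c + 1 := by omega
  rw [sum_subset (filter_subset_filter _ (range_subset_range.2 hsub))
      fun n _ hn => by simp_all [choose_eq_zero_of_lt],
    sum_filter_even_range, ← sum_range_reflect]
  calc _ = ∑ j ∈ range (c + 1), ((2 * c - h)! / c ! : ℝ) *
        ((-1) ^ (c - j) * c.choose j * (2 * j).descFactorial h) := by
        refine sum_congr rfl fun j hjc => ?_
        have hj : j ≤ c := Nat.lt_succ_iff.mp (mem_range.mp hjc)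
        rw [show c + 1 - 1 - j = c - j by omega, show 2 * c - 2 * (c - j) = 2 * j by omega,
          Nat.mul_div_cancel_left _ two_pos, Nat.mul_div_cancel_left _ two_pos, mul_assoc,
          factorial_mul_factorial_div_mul_choose_eq (h := h) (by omega) hj]
        ring
    _ = 0 := by rw [← mul_sum, hdiff, mul_zero]

/-- The key combinatorial identity `A_h = 0` from the proof of Lemma 2 of the paper:
for even `ℓ ≥ 2` and `0 ≤ h < ℓ/2`,
`∑_{n even, 0 ≤ n ≤ ℓ-h} (-1)^{n/2} · n!(ℓ-n)! / ((n/2)!((ℓ-n)/2)!) · C(ℓ-h, n) = 0`. -/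
theorem stmt3 (ℓ h : ℕ) (hℓ : 2 ≤ ℓ) (hev : Even ℓ) (hh : h < ℓ / 2) :
    ∑ n ∈ (Finset.range (ℓ - h + 1)).filter (fun n => Even n),
      (-1 : ℝ) ^ (n / 2) *
        ((Nat.factorial n : ℝ) * (Nat.factorial (ℓ - n) : ℝ) /
          ((Nat.factorial (n / 2) : ℝ) * (Nat.factorial ((ℓ - n) / 2) : ℝ))) *
        ((ℓ - h).choose n : ℝ) = 0 :=
  stmt3_general ℓ h hev hh
end

section
/- For every integer k ≥ 1, ∫₀^∞ ln(√(2u)) L_k(u) e^{-u} du = −1/(2k), and for k = 0, ∫₀^∞ ln(√(2u)) e^{-u} du = (ln 2 − γ)/2, where γ is the Euler–Mascheroni constant. -/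
/-!
Expanding `L_k`, the integral becomes a combination of the moments
`∫₀^∞ ln(√(2u)) uⁱ e^{-u} du = i! (ln 2 - γ + Hᵢ) / 2`, where the logarithmic part
`∫₀^∞ uⁱ ln u e^{-u} du = Γ'(i + 1) = i! (Hᵢ - γ)` comes from differentiating the Gamma integral.
What remains are the alternating binomial sums `∑ (-1)ⁱ C(k,i) = 0` and, for `k ≥ 1`,
`∑ (-1)ⁱ C(k,i) Hᵢ = -1/k`: Pascal's rule turns the latter into
`-∑ (-1)ʲ C(k-1,j) / (j + 1)`, and `C(k-1,j) / (j + 1) = C(k,j+1) / k`.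
-/

open MeasureTheory Real

/-- The Laguerre polynomial of degree `k`, `L_k(u) = ∑_{i=0}^k C(k,i) (-u)^i / i!`. -/
noncomputable def laguerre (k : ℕ) (u : ℝ) : ℝ :=
  ∑ i ∈ Finset.range (k + 1), (k.choose i : ℝ) * (-u) ^ i / (Nat.factorial i : ℝ)

open Finset Set Asymptotics
open scoped Nat Topology

local notation "γ" => eulerMascheroniConstant

theorem sum_range_alternating_choose_succ_mul {R : Type*} [CommRing R] (n : ℕ) (g : ℕ → R) :
    ∑ i ∈ range (n + 2), (-1 : R) ^ i * (n + 1).choose i * g i =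
      ∑ j ∈ range (n + 1), (-1 : R) ^ j * n.choose j * (g j - g (j + 1)) := by
  have hshift := sum_range_succ' (fun i ↦ (-1 : R) ^ i * n.choose i * g i) (n + 1)
  rw [sum_range_succ, Nat.choose_succ_self, Nat.cast_zero, mul_zero, zero_mul, add_zero]
    at hshift
  have hpascal (j : ℕ) : (-1 : R) ^ (j + 1) * (n + 1).choose (j + 1) * g (j + 1) =
      (-1) ^ (j + 1) * n.choose (j + 1) * g (j + 1) - (-1) ^ j * n.choose j * g (j + 1) := by
    rw [Nat.choose_succ_succ']
    push_cast
    ring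
  rw [sum_range_succ']
  simp only [hpascal, mul_sub, sum_sub_distrib, hshift, pow_zero, Nat.choose_zero_right,
    Nat.cast_one, one_mul]
  abel

theorem sum_range_alternating_choose_div_succ (n : ℕ) :
    ∑ j ∈ range (n + 1), (-1 : ℚ) ^ j * n.choose j / (j + 1) = 1 / (n + 1) := by
  have hchoose (j : ℕ) : (n.choose j : ℚ) / (j + 1) = (n + 1).choose (j + 1) / (n + 1) := by
    rw [div_eq_div_iff (by positivity) (by positivity)]
    exact_mod_cast (mul_comm _ _).trans (Nat.add_one_mul_choose_eq n j)
  have htotal : ∑ j ∈ range (n + 1), (-1 : ℚ) ^ j * (n + 1).choose (j + 1) = 1 := by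
    have h := Int.alternating_sum_range_choose_of_ne n.succ_ne_zero
    rw [sum_range_succ'] at h
    simp only [pow_succ, mul_neg_one, neg_mul, sum_neg_distrib] at h
    exact_mod_cast (by simpa [neg_add_eq_zero] using h :
      ∑ j ∈ range (n + 1), (-1 : ℤ) ^ j * (n + 1).choose (j + 1) = 1)
  simp_rw [mul_div_assoc, hchoose, ← mul_div_assoc, ← sum_div, htotal]

theorem sum_range_alternating_choose_mul_harmonic (n : ℕ) :
    ∑ i ∈ range (n + 2), (-1 : ℚ) ^ i * (n + 1).choose i * harmonic i = -1 / (n + 1) := by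
  simp_rw [sum_range_alternating_choose_succ_mul, harmonic_succ, sub_add_cancel_left, mul_neg,
    sum_neg_distrib, ← div_eq_mul_inv, Nat.cast_add_one, sum_range_alternating_choose_div_succ,
    neg_div]

theorem Complex.mellinConvergent_log_smul_exp_neg {s : ℂ} (hs : 0 < s.re) :
    MellinConvergent (fun t : ℝ ↦ Real.log t • (Real.exp (-t) : ℂ)) s := by
  refine (mellin_hasDerivAt_of_isBigO_rpow (E := ℂ) ?_ ?_ (lt_add_one _) ?_ hs).1
  · exact (by fun_prop : Continuous fun t : ℝ ↦ (Real.exp (-t) : ℂ)).continuousOn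
      |>.locallyIntegrableOn measurableSet_Ioi
  · rw [← isBigO_norm_left]
    simp_rw [Complex.norm_real, isBigO_norm_left]
    simpa only [neg_one_mul] using (isLittleO_exp_neg_mul_rpow_atTop zero_lt_one _).isBigO
  · simp_rw [neg_zero, rpow_zero]
    refine isBigO_const_of_tendsto (y := (1 : ℂ)) ?_ one_ne_zero
    simpa using ((by fun_prop : Continuous fun t : ℝ ↦ (Real.exp (-t) : ℂ)).tendsto 0).mono_left
      nhdsWithin_le_nhds

theorem Complex.ofReal_rpow_mul_log_mul_exp_neg {t : ℝ} (ht : 0 < t) (s : ℝ) :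
    ((t ^ (s - 1) * (Real.log t * Real.exp (-t)) : ℝ) : ℂ) =
      (t : ℂ) ^ ((s : ℂ) - 1) * (Real.log t * Real.exp (-t)) := by
  push_cast [ofReal_cpow ht.le]
  rfl

namespace Real

theorem integrableOn_rpow_mul_log_mul_exp_neg {s : ℝ} (hs : 0 < s) :
    IntegrableOn (fun t ↦ t ^ (s - 1) * (log t * exp (-t))) (Ioi 0) := by
  have h := Complex.mellinConvergent_log_smul_exp_neg (s := s) (by simpa using hs)
  have h' : IntegrableOn (fun t : ℝ ↦ ((t ^ (s - 1) * (log t * exp (-t)) : ℝ) : ℂ)) (Ioi 0) :=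
    h.congr_fun (fun t ht ↦ by simp [Complex.ofReal_rpow_mul_log_mul_exp_neg ht]) measurableSet_Ioi
  simpa only [IntegrableOn, RCLike.re_to_complex, Complex.ofReal_re] using h'.re

theorem deriv_Gamma_eq_integral {s : ℝ} (hs : 0 < s) :
    deriv Gamma s = ∫ t in Ioi 0, t ^ (s - 1) * (log t * exp (-t)) := by
  have hGamma : Complex.Gamma =ᶠ[𝓝 (s : ℂ)] Complex.GammaIntegral := by
    filter_upwards [Complex.continuous_re.isOpen_preimage _ isOpen_Ioi |>.mem_nhds
      (by simpa using hs)] with z hz using Complex.Gamma_eq_integral hz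
  have h := ((Complex.hasDerivAt_GammaIntegral (by simpa using hs)).congr_of_eventuallyEq
    hGamma).real_of_complex
  change HasDerivAt Gamma _ s at h
  rw [h.deriv, ← setIntegral_congr_fun measurableSet_Ioi
    (fun t ht ↦ Complex.ofReal_rpow_mul_log_mul_exp_neg ht s), integral_complex_ofReal,
    Complex.ofReal_re]

theorem integral_pow_mul_log_mul_exp_neg (n : ℕ) :
    ∫ t in Ioi 0, t ^ n * (log t * exp (-t)) = n ! * (-γ + harmonic n) := by
  simpa [rpow_natCast] using (deriv_Gamma_eq_integral (s := n + 1) (by positivity)).symm.trans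
    (deriv_Gamma_nat n)

theorem integrableOn_pow_mul_log_mul_exp_neg (n : ℕ) :
    IntegrableOn (fun t ↦ t ^ n * (log t * exp (-t))) (Ioi 0) := by
  simpa [rpow_natCast] using integrableOn_rpow_mul_log_mul_exp_neg (s := n + 1) (by positivity)

theorem integral_pow_mul_exp_neg (n : ℕ) : ∫ t in Ioi 0, t ^ n * exp (-t) = n ! := by
  simpa [rpow_natCast, mul_comm, Gamma_nat_eq_factorial] using
    (Gamma_eq_integral (s := n + 1) (by positivity)).symm

theorem integrableOn_pow_mul_exp_neg (n : ℕ) :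
    IntegrableOn (fun t ↦ t ^ n * exp (-t)) (Ioi 0) := by
  simpa [rpow_natCast, mul_comm] using GammaIntegral_convergent (s := n + 1) (by positivity)

end Real

theorem eqOn_log_sqrt_two_mul_mul_pow_mul_exp_neg (i : ℕ) :
    EqOn (fun u ↦ log √(2 * u) * (u ^ i * exp (-u)))
      (fun u ↦ log 2 / 2 * (u ^ i * exp (-u)) + 2⁻¹ * (u ^ i * (log u * exp (-u)))) (Ioi 0) := by
  intro u (hu : 0 < u)
  simp only [log_sqrt (by positivity : 0 ≤ 2 * u), log_mul two_ne_zero hu.ne']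
  ring

theorem integrableOn_log_sqrt_two_mul_mul_pow_mul_exp_neg (i : ℕ) :
    IntegrableOn (fun u ↦ log √(2 * u) * (u ^ i * exp (-u))) (Ioi 0) :=
  IntegrableOn.congr_fun (((integrableOn_pow_mul_exp_neg i).const_mul _).add
    ((integrableOn_pow_mul_log_mul_exp_neg i).const_mul _))
    (eqOn_log_sqrt_two_mul_mul_pow_mul_exp_neg i).symm measurableSet_Ioi

theorem integral_log_sqrt_two_mul_mul_pow_mul_exp_neg (i : ℕ) :
    ∫ u in Ioi 0, log √(2 * u) * (u ^ i * exp (-u)) = i ! * (log 2 - γ + harmonic i) / 2 := by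
  rw [setIntegral_congr_fun measurableSet_Ioi (eqOn_log_sqrt_two_mul_mul_pow_mul_exp_neg i),
    integral_add ((integrableOn_pow_mul_exp_neg i).const_mul _)
      ((integrableOn_pow_mul_log_mul_exp_neg i).const_mul _),
    integral_const_mul, integral_const_mul, integral_pow_mul_exp_neg,
    integral_pow_mul_log_mul_exp_neg]
  ring

theorem integral_log_sqrt_two_mul_mul_laguerre_mul_exp_neg (k : ℕ) :
    ∫ u in Ioi 0, log √(2 * u) * laguerre k u * exp (-u) =
      ((log 2 - γ) * ∑ i ∈ range (k + 1), (-1) ^ i * (k.choose i : ℝ) +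
        ∑ i ∈ range (k + 1), (-1) ^ i * (k.choose i : ℝ) * harmonic i) / 2 := by
  have hexpand : (fun u ↦ log √(2 * u) * laguerre k u * exp (-u)) = fun u ↦
      ∑ i ∈ range (k + 1),
        (-1) ^ i * (k.choose i : ℝ) / i ! * (log √(2 * u) * (u ^ i * exp (-u))) := by
    ext u
    simp only [laguerre, mul_sum, sum_mul, neg_pow u]
    refine sum_congr rfl fun i _ ↦ ?_
    ring
  rw [hexpand, integral_finsetSum _
    fun i _ ↦ (integrableOn_log_sqrt_two_mul_mul_pow_mul_exp_neg i).const_mul _]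
  simp only [integral_const_mul, integral_log_sqrt_two_mul_mul_pow_mul_exp_neg, mul_sum, sum_div,
    ← sum_add_distrib]
  congr! 1 with i
  field_simp

/-- The Laguerre coefficients of `A(r) = ln r`:
`∫₀^∞ ln(√(2u)) L_k(u) e^{-u} du = -1/(2k)` for `k ≥ 1`, while for `k = 0` the integral
equals `(ln 2 - γ)/2`, `γ` being the Euler–Mascheroni constant. -/
theorem stmt5 :
    (∀ k : ℕ, 1 ≤ k →
      ∫ u in Set.Ioi (0 : ℝ),
        Real.log (Real.sqrt (2 * u)) * laguerre k u * Real.exp (-u) = -1 / (2 * (k : ℝ))) ∧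
    (∫ u in Set.Ioi (0 : ℝ), Real.log (Real.sqrt (2 * u)) * Real.exp (-u) =
      (Real.log 2 - Real.eulerMascheroniConstant) / 2) := by
  constructor
  · intro k hk
    obtain ⟨n, rfl⟩ := Nat.exists_eq_add_of_le' hk
    have halt : ∑ i ∈ range (n + 2), (-1 : ℝ) ^ i * ((n + 1).choose i : ℝ) = 0 := by
      exact_mod_cast Int.alternating_sum_range_choose_of_ne n.succ_ne_zero
    have hharm : ∑ i ∈ range (n + 2), (-1 : ℝ) ^ i * ((n + 1).choose i : ℝ) * harmonic i =
        -1 / (n + 1) := by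
      exact_mod_cast sum_range_alternating_choose_mul_harmonic n
    rw [integral_log_sqrt_two_mul_mul_laguerre_mul_exp_neg, halt, hharm]
    push_cast
    field_simp
    ring
  · simpa [laguerre] using integral_log_sqrt_two_mul_mul_laguerre_mul_exp_neg 0
end

section
/- Let α > 0 and β ∈ (0,1). Let C_ψ : ℝ → ℂ be bounded and continuous and set ψ̂(λ) = C_ψ(λ)|λ|^α; assume ψ̂ ∈ L²(ℝ). Let C_X : ℝ → [0,∞) be bounded and continuous. Define σ_j² = ∫_ℝ |ψ̂(2^j λ)|² C_X(λ) |λ|^{β−1} dλ for j ∈ ℤ. Then lim_{j→∞} 2^{jβ} σ_j² = C_X(0) ∫_ℝ |ψ̂(λ)|² |λ|^{β−1} dλ, and this limit integral is finite. -/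
/-!
After the substitution `u = 2^j λ`, the factor `2^{jβ}` is absorbed exactly by the homogeneity
of `|λ|^{β-1} dλ`, so `2^{jβ} σ_j² = ∫ |ψ̂(u)|² |u|^{β-1} C_X(2^{-j} u) du`. The weight
`|ψ̂(u)|² |u|^{β-1}` is integrable: near `0` it is `O(|u|^{2α+β-1})` with `2α + β - 1 > -1`, and
away from `0` it is dominated by `|ψ̂|² ∈ L¹`. Since `C_X` is bounded and continuous,
dominated convergence gives the limit `C_X(0) ∫ |ψ̂(u)|² |u|^{β-1} du`.
-/

open MeasureTheory Real Filter

open Metric in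
lemma integrable_mul_abs_rpow_of_norm_le {f : ℝ → ℝ} {C r s : ℝ} (hf : Integrable f)
    (hs : s ≤ 0) (hrs : -1 < r + s) (hbound : ∀ x, ‖f x‖ ≤ C * |x| ^ r) :
    Integrable fun x => f x * |x| ^ s := by
  have hmeas : AEStronglyMeasurable (fun x => f x * |x| ^ s) volume :=
    hf.aestronglyMeasurable.mul (by fun_prop : Measurable fun x : ℝ => |x| ^ s).aestronglyMeasurable
  have hnorm (x : ℝ) : ‖f x * |x| ^ s‖ = ‖f x‖ * |x| ^ s := by
    rw [norm_mul, Real.norm_of_nonneg (Real.rpow_nonneg (abs_nonneg x) s)]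
  have hnear : IntegrableOn (fun x => f x * |x| ^ s) (ball 0 1) := by
    refine integrableOn_ball_of_norm_le_rpow (α := -(r + s)) (C := C) (by simp)
      (by simp only [Module.finrank_self, Nat.cast_one]; linarith) ?_ hmeas
    filter_upwards [ae_restrict_of_ae (Measure.ae_ne volume (0 : ℝ))] with x hx
    rw [hnorm, neg_neg, Real.norm_eq_abs x, Real.rpow_add (abs_pos.2 hx), ← mul_assoc]
    exact mul_le_mul_of_nonneg_right (hbound x) (Real.rpow_nonneg (abs_nonneg x) s)
  have hfar : IntegrableOn (fun x => f x * |x| ^ s) (ball 0 1)ᶜ := by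
    refine hf.norm.integrableOn.mono' hmeas.restrict ?_
    refine (ae_restrict_iff' measurableSet_ball.compl).2 (ae_of_all _ fun x hx => ?_)
    have h1 : 1 ≤ |x| := by simpa [Real.norm_eq_abs] using hx
    rw [hnorm]
    exact mul_le_of_le_one_right (norm_nonneg _) (Real.rpow_le_one_of_one_le_of_nonpos h1 hs)
  simpa using hnear.union hfar

lemma integral_comp_mul_left_mul_abs_rpow (f w : ℝ → ℝ) {c : ℝ} (hc : 0 < c) (s : ℝ) :
    c ^ (s + 1) * ∫ x, f (c * x) * w x * |x| ^ s = ∫ u, f u * |u| ^ s * w (c⁻¹ * u) := by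
  have hcomp := Measure.integral_comp_mul_left (fun u => f u * w (c⁻¹ * u) * |c⁻¹ * u| ^ s) c
  simp only [inv_mul_cancel_left₀ hc.ne'] at hcomp
  rw [hcomp, abs_of_pos (inv_pos.2 hc), smul_eq_mul, ← integral_const_mul, ← integral_const_mul]
  congr 1 with u
  rw [abs_mul, abs_of_pos (inv_pos.2 hc), Real.mul_rpow (inv_pos.2 hc).le (abs_nonneg u),
    Real.inv_rpow hc.le, Real.rpow_add_one hc.ne']
  field_simp

lemma tendsto_integral_mul_comp_mul {ι : Type*} {l : Filter ι} [l.IsCountablyGenerated]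
    {F w : ℝ → ℝ} {c : ι → ℝ} {M : ℝ} (hF : Integrable F) (hw : Continuous w)
    (hwM : ∀ x, ‖w x‖ ≤ M) (hc : Tendsto c l (nhds 0)) :
    Tendsto (fun i => ∫ u, F u * w (c i * u)) l (nhds (w 0 * ∫ u, F u)) := by
  rw [← integral_const_mul]
  refine tendsto_integral_filter_of_dominated_convergence (fun u => ‖F u‖ * M)
    (Eventually.of_forall fun i => hF.aestronglyMeasurable.mul ?_) ?_ (hF.norm.mul_const M) ?_
  · exact (hw.comp (continuous_const.mul continuous_id)).aestronglyMeasurable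
  · exact Eventually.of_forall fun i => ae_of_all _ fun u => by
      rw [norm_mul]; exact mul_le_mul_of_nonneg_left (hwM _) (norm_nonneg _)
  · refine ae_of_all _ fun u => ?_
    have := ((hw.tendsto 0).comp (by simpa using hc.mul_const u)).const_mul (F u)
    simpa [mul_comm] using this

lemma tendsto_inv_two_zpow_atTop : Tendsto (fun j : ℤ => ((2 : ℝ) ^ j)⁻¹) atTop (nhds 0) := by
  simpa [Function.comp_def, ← Real.rpow_intCast, Real.inv_rpow] using
    (tendsto_rpow_atTop_of_base_lt_one 2⁻¹ (by norm_num) (by norm_num)).comp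
      tendsto_intCast_atTop_atTop

theorem stmt7_general (α β : ℝ) (hα : 0 < α) (hβ : β ∈ Set.Ioo (0 : ℝ) 1)
    (Cψ : ℝ → ℂ) (hCψb : ∃ M, ∀ x, ‖Cψ x‖ ≤ M)
    (CX : ℝ → ℝ) (hCXc : Continuous CX) (hCXnn : ∀ x, 0 ≤ CX x) (hCXb : ∃ M, ∀ x, CX x ≤ M)
    (ψhat : ℝ → ℂ) (hψ : ∀ lam : ℝ, ψhat lam = Cψ lam * Complex.ofReal (|lam| ^ α))
    (hψL2 : MemLp ψhat 2 volume) :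
    Tendsto (fun j : ℤ => (2 : ℝ) ^ ((j : ℝ) * β) *
        ∫ lam : ℝ, ‖ψhat ((2 : ℝ) ^ j * lam)‖ ^ 2 * CX lam * |lam| ^ (β - 1))
      atTop (nhds (CX 0 * ∫ lam : ℝ, ‖ψhat lam‖ ^ 2 * |lam| ^ (β - 1))) ∧
    Integrable (fun lam : ℝ => ‖ψhat lam‖ ^ 2 * |lam| ^ (β - 1)) := by
  obtain ⟨hβ0, hβ1⟩ := hβ
  obtain ⟨M, hM⟩ := hCψb
  obtain ⟨K, hK⟩ := hCXb
  have hψ_le (x : ℝ) : ‖‖ψhat x‖ ^ 2‖ ≤ M ^ 2 * |x| ^ (2 * α) := by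
    have : ‖ψhat x‖ ≤ M * |x| ^ α := by
      rw [hψ, norm_mul, Complex.norm_real, Real.norm_of_nonneg (by positivity)]
      exact mul_le_mul_of_nonneg_right (hM x) (by positivity)
    rw [norm_pow, norm_norm, mul_comm 2 α, Real.rpow_mul (abs_nonneg x), Real.rpow_two, ← mul_pow]
    exact pow_le_pow_left₀ (norm_nonneg _) this 2
  have hint : Integrable fun lam : ℝ => ‖ψhat lam‖ ^ 2 * |lam| ^ (β - 1) :=
    integrable_mul_abs_rpow_of_norm_le
      ((memLp_two_iff_integrable_sq_norm hψL2.1).1 hψL2) (by linarith) (by linarith) hψ_le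
  refine ⟨?_, hint⟩
  have hscale (j : ℤ) : (2 : ℝ) ^ ((j : ℝ) * β) *
      ∫ lam : ℝ, ‖ψhat ((2 : ℝ) ^ j * lam)‖ ^ 2 * CX lam * |lam| ^ (β - 1) =
      ∫ u, ‖ψhat u‖ ^ 2 * |u| ^ (β - 1) * CX (((2 : ℝ) ^ j)⁻¹ * u) := by
    rw [← integral_comp_mul_left_mul_abs_rpow (fun u => ‖ψhat u‖ ^ 2) CX (zpow_pos two_pos j),
      sub_add_cancel, Real.rpow_mul zero_le_two, Real.rpow_intCast]
  simp_rw [hscale]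
  exact tendsto_integral_mul_comp_mul hint hCXc
    (fun x => (Real.norm_of_nonneg (hCXnn x)).trans_le (hK x)) tendsto_inv_two_zpow_atTop

/-- Large-scale behaviour of the wavelet-coefficient variance: under Assumption 1 on the
wavelet (`ψ̂(λ) = C_ψ(λ)|λ|^α`) and Assumption 2(b) on the spectral density
(`f_X(λ) = C_X(λ)|λ|^{β-1}`), we have
`2^{jβ} σ_j² → C_X(0) ∫ |ψ̂(λ)|² |λ|^{β-1} dλ` as `j → ∞`, and the limit integral is finite. -/
theorem stmt7 (α β : ℝ) (hα : 0 < α) (hβ : β ∈ Set.Ioo (0 : ℝ) 1)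
    (Cψ : ℝ → ℂ) (hCψc : Continuous Cψ) (hCψb : ∃ M, ∀ x, ‖Cψ x‖ ≤ M)
    (CX : ℝ → ℝ) (hCXc : Continuous CX) (hCXnn : ∀ x, 0 ≤ CX x) (hCXb : ∃ M, ∀ x, CX x ≤ M)
    (ψhat : ℝ → ℂ) (hψ : ∀ lam : ℝ, ψhat lam = Cψ lam * Complex.ofReal (|lam| ^ α))
    (hψL2 : MemLp ψhat 2 volume) :
    Tendsto (fun j : ℤ => (2 : ℝ) ^ ((j : ℝ) * β) *
        ∫ lam : ℝ, ‖ψhat ((2 : ℝ) ^ j * lam)‖ ^ 2 * CX lam * |lam| ^ (β - 1))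
      atTop (nhds (CX 0 * ∫ lam : ℝ, ‖ψhat lam‖ ^ 2 * |lam| ^ (β - 1))) ∧
    Integrable (fun lam : ℝ => ‖ψhat lam‖ ^ 2 * |lam| ^ (β - 1)) :=
  stmt7_general α β hα hβ Cψ hCψb CX hCXc hCXnn hCXb ψhat hψ hψL2
end

section
/- Let α > 0 and β₁, β₂ ∈ (0,1). Let C_ψ : ℝ → ℂ be bounded and continuous with C_ψ(0) ≠ 0, set ψ̂(λ) = C_ψ(λ)|λ|^α, and assume ψ̂ ∈ L²(ℝ). For p = 1, 2 let C_{X_p} : ℝ → [0,∞) be bounded and continuous with C_{X_p}(0) > 0, and define σ_{p,j}² = ∫_ℝ |ψ̂(2^j λ)|² C_{X_p}(λ) |λ|^{β_p − 1} dλ for j ∈ ℤ. Then liminf_{j→∞} (1/j) |ln σ_{1,j} − ln σ_{2,j}| ≥ (ln 2 / 2) · |β₁ − β₂|. -/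
/-!
Substituting `μ = 2^j λ` gives `σ_{p,j}² = 2^{-jβ_p} J_{p,j}` with
`J_{p,j} = ∫ |ψ̂(μ)|² |μ|^{β_p-1} C_{X_p}(2^{-j} μ) dμ`. The weight `|ψ̂(μ)|² |μ|^{β_p-1}` is
integrable: it is `O(|μ|^{2α+β_p-1})` near `0` and at most `|ψ̂(μ)|²` for `|μ| ≥ 1`. By dominated
convergence `J_{p,j} → C_{X_p}(0) ∫ |ψ̂(μ)|² |μ|^{β_p-1} dμ > 0`, so `(1/j) ln σ_{p,j}` tends to
`-β_p ln 2 / 2`, and the liminf is a limit, equal to `(ln 2 / 2) |β₁ - β₂|`.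
-/

open MeasureTheory Real Filter Set Metric Topology

lemma integral_comp_mul_mul_abs_rpow (g C : ℝ → ℝ) {a : ℝ} (ha : 0 < a) (β : ℝ) :
    ∫ x, g (a * x) * C x * |x| ^ (β - 1) = a ^ (-β) * ∫ y, g y * |y| ^ (β - 1) * C (a⁻¹ * y) := by
  have hscale : ∀ x, g (a * x) * C x * |x| ^ (β - 1)
      = a ^ (1 - β) * (g (a * x) * |a * x| ^ (β - 1) * C (a⁻¹ * (a * x))) := by
    intro x
    rw [inv_mul_cancel_left₀ ha.ne', abs_mul, abs_of_pos ha, mul_rpow ha.le (abs_nonneg x)]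
    have : a ^ (1 - β) * a ^ (β - 1) = 1 := by rw [← rpow_add ha]; norm_num
    linear_combination (g (a * x) * C x * |x| ^ (β - 1)) * this.symm
  simp_rw [hscale]
  rw [integral_const_mul,
    Measure.integral_comp_mul_left (fun y => g y * |y| ^ (β - 1) * C (a⁻¹ * y)),
    abs_of_pos (inv_pos.2 ha), smul_eq_mul, ← mul_assoc, ← rpow_neg_one, ← rpow_add ha]
  ring_nf

lemma tendsto_integral_mul_comp_mul_s8 {ι : Type*} {l : Filter ι} [l.IsCountablyGenerated]
    {h C : ℝ → ℝ} (hh : Integrable h) (hC : Continuous C) {N : ℝ} (hCN : ∀ x, |C x| ≤ N)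
    {t : ι → ℝ} (ht : Tendsto t l (𝓝 0)) :
    Tendsto (fun i => ∫ x, h x * C (t i * x)) l (𝓝 ((∫ x, h x) * C 0)) := by
  rw [← integral_mul_const]
  refine tendsto_integral_filter_of_dominated_convergence (fun x => |h x| * N)
    (.of_forall fun i =>
      hh.1.mul (hC.comp (continuous_const.mul continuous_id)).aestronglyMeasurable)
    (.of_forall fun i => .of_forall fun x => ?_) (hh.abs.mul_const N) (.of_forall fun x => ?_)
  · rw [norm_mul, norm_eq_abs, norm_eq_abs]
    exact mul_le_mul_of_nonneg_left (hCN _) (abs_nonneg _)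
  · refine tendsto_const_nhds.mul ((hC.tendsto 0).comp ?_)
    simpa using ht.mul_const x

lemma tendsto_inv_mul_log_sqrt_zpow_rpow_mul {b β K : ℝ} (hb : 0 < b) {J : ℤ → ℝ}
    (hK : 0 < K) (hJ : Tendsto J atTop (𝓝 K)) :
    Tendsto (fun j : ℤ => (j : ℝ)⁻¹ * log √((b ^ j) ^ (-β) * J j)) atTop
      (𝓝 (-(β * log b / 2))) := by
  have hlog : Tendsto (fun j : ℤ => -(β * log b / 2) + log (J j) * (2 * (j : ℝ))⁻¹) atTop
      (𝓝 (-(β * log b / 2))) := by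
    simpa using tendsto_const_nhds.add (((continuousAt_log hK.ne').tendsto.comp hJ).mul
      (tendsto_intCast_atTop_atTop.const_mul_atTop two_pos).inv_tendsto_atTop)
  refine hlog.congr' ?_
  filter_upwards [hJ.eventually (eventually_gt_nhds hK), eventually_gt_atTop 0] with j hJj hj
  have hj : (0 : ℝ) < j := by exact_mod_cast hj
  rw [log_sqrt (by positivity), log_mul (by positivity) hJj.ne', log_rpow (by positivity),
    log_zpow]
  field_simp

section
variable {E : Type*} [NormedAddCommGroup E]

lemma integrable_norm_sq_mul_abs_rpow {f : ℝ → E} (hf : MemLp f 2) {M α β : ℝ}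
    (hfM : ∀ x, ‖f x‖ ≤ M * |x| ^ α) (hαβ : 0 < 2 * α + β) (hβ : β ≤ 1) :
    Integrable fun x => ‖f x‖ ^ 2 * |x| ^ (β - 1) := by
  have hmeas : AEStronglyMeasurable (fun x => ‖f x‖ ^ 2 * |x| ^ (β - 1)) :=
    (hf.1.norm.pow 2).mul (measurable_abs.pow_const _).aestronglyMeasurable
  have hsq : Integrable fun x => ‖f x‖ ^ 2 := by
    simpa using hf.integrable_norm_rpow two_ne_zero ENNReal.ofNat_ne_top
  have hnear : IntegrableOn (fun x => ‖f x‖ ^ 2 * |x| ^ (β - 1)) (ball 0 1) := by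
    refine integrableOn_ball_of_norm_le_rpow (by simp) (C := M ^ 2) (α := 1 - (2 * α + β))
      (by simp; linarith) ?_ hmeas
    refine ae_restrict_of_ae ?_
    filter_upwards [compl_mem_ae_iff.2 (measure_singleton (0 : ℝ))] with x hx
    have hx : 0 < |x| := abs_pos.2 hx
    calc ‖‖f x‖ ^ 2 * |x| ^ (β - 1)‖ = ‖f x‖ ^ 2 * |x| ^ (β - 1) := by
          rw [norm_of_nonneg (by positivity)]
      _ ≤ (M * |x| ^ α) ^ 2 * |x| ^ (β - 1) := by gcongr; exact hfM x
      _ = M ^ 2 * ‖x‖ ^ (-(1 - (2 * α + β))) := by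
          rw [norm_eq_abs, mul_pow, ← rpow_natCast (|x| ^ α), ← rpow_mul hx.le, mul_assoc,
            ← rpow_add hx]
          congr 2; push_cast; ring
  have hfar : IntegrableOn (fun x => ‖f x‖ ^ 2 * |x| ^ (β - 1)) (ball 0 1)ᶜ := by
    refine hsq.integrableOn.mono' hmeas.restrict ((ae_restrict_iff' measurableSet_ball.compl).2 ?_)
    filter_upwards with x hx
    have hx : 1 ≤ |x| := by simpa using hx
    rw [norm_of_nonneg (by positivity)]
    exact mul_le_of_le_one_right (by positivity) (rpow_le_one_of_one_le_of_nonpos hx (by linarith))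
  simpa using hnear.union hfar

lemma integral_norm_sq_mul_abs_rpow_pos {f : ℝ → E} {β : ℝ}
    (hint : Integrable fun x => ‖f x‖ ^ 2 * |x| ^ (β - 1)) (hf : ∀ᶠ x in 𝓝[>] 0, f x ≠ 0) :
    0 < ∫ x, ‖f x‖ ^ 2 * |x| ^ (β - 1) := by
  rw [integral_pos_iff_support_of_nonneg (fun x => by positivity) hint]
  obtain ⟨ε, hε, hsub⟩ := mem_nhdsGT_iff_exists_Ioo_subset.1 hf
  refine ((Measure.measure_Ioo_pos volume).2 (mem_Ioi.1 hε)).trans_le (measure_mono fun x hx =>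
    (mul_pos (pow_pos (norm_pos_iff.2 (hsub hx)) 2) (rpow_pos_of_pos (abs_pos.2 hx.1.ne') _)).ne')

theorem tendsto_inv_mul_log_sqrt_integral_norm_sq_comp_zpow_mul {f : ℝ → E} (hf : MemLp f 2)
    {M α β : ℝ} (hfM : ∀ x, ‖f x‖ ≤ M * |x| ^ α) (hf0 : ∀ᶠ x in 𝓝[>] 0, f x ≠ 0)
    (hαβ : 0 < 2 * α + β) (hβ : β ≤ 1) {C : ℝ → ℝ} (hC : Continuous C) {N : ℝ}
    (hCN : ∀ x, |C x| ≤ N) (hC0 : 0 < C 0) :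
    Tendsto (fun j : ℤ => (j : ℝ)⁻¹ * log √(∫ x, ‖f ((2 : ℝ) ^ j * x)‖ ^ 2 * C x * |x| ^ (β - 1)))
      atTop (𝓝 (-(β * log 2 / 2))) := by
  have hint := integrable_norm_sq_mul_abs_rpow hf hfM hαβ hβ
  have hscale : Tendsto (fun j : ℤ => ((2 : ℝ) ^ j)⁻¹) atTop (𝓝 0) := by
    have h2 := (tendsto_rpow_atTop_of_base_gt_one 2 one_lt_two).comp tendsto_intCast_atTop_atTop
    simpa [Function.comp_def, Pi.inv_def, rpow_intCast] using h2.inv_tendsto_atTop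
  refine (tendsto_inv_mul_log_sqrt_zpow_rpow_mul two_pos
    (mul_pos (integral_norm_sq_mul_abs_rpow_pos hint hf0) hC0)
    (tendsto_integral_mul_comp_mul_s8 hint hC hCN hscale)).congr fun j => ?_
  rw [integral_comp_mul_mul_abs_rpow (fun y => ‖f y‖ ^ 2) C (zpow_pos two_pos j)]

end

/-- Corollary 1 of the paper (second part): for two long-range dependent spectral densities
`f_{X_p}(λ) = C_{X_p}(λ)|λ|^{β_p - 1}`, the scale-normalized difference of the logarithms of
the wavelet-coefficient standard deviations satisfies
`liminf_{j→∞} (1/j)|ln σ_{1,j} - ln σ_{2,j}| ≥ (ln 2 / 2)|β₁ - β₂|`. -/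
theorem stmt8 (α β₁ β₂ : ℝ) (hα : 0 < α)
    (hβ₁ : β₁ ∈ Set.Ioo (0 : ℝ) 1) (hβ₂ : β₂ ∈ Set.Ioo (0 : ℝ) 1)
    (Cψ : ℝ → ℂ) (hCψc : Continuous Cψ) (hCψb : ∃ M, ∀ x, ‖Cψ x‖ ≤ M) (hCψ0 : Cψ 0 ≠ 0)
    (ψhat : ℝ → ℂ) (hψ : ∀ lam : ℝ, ψhat lam = Cψ lam * Complex.ofReal (|lam| ^ α))
    (hψL2 : MemLp ψhat 2 volume)
    (CX₁ CX₂ : ℝ → ℝ) (h₁c : Continuous CX₁) (h₂c : Continuous CX₂)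
    (h₁nn : ∀ x, 0 ≤ CX₁ x) (h₂nn : ∀ x, 0 ≤ CX₂ x)
    (h₁b : ∃ M, ∀ x, CX₁ x ≤ M) (h₂b : ∃ M, ∀ x, CX₂ x ≤ M)
    (h₁0 : 0 < CX₁ 0) (h₂0 : 0 < CX₂ 0)
    (σ₁ σ₂ : ℤ → ℝ)
    (hσ₁ : ∀ j : ℤ, σ₁ j =
      Real.sqrt (∫ lam : ℝ, ‖ψhat ((2 : ℝ) ^ j * lam)‖ ^ 2 * CX₁ lam * |lam| ^ (β₁ - 1)))
    (hσ₂ : ∀ j : ℤ, σ₂ j =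
      Real.sqrt (∫ lam : ℝ, ‖ψhat ((2 : ℝ) ^ j * lam)‖ ^ 2 * CX₂ lam * |lam| ^ (β₂ - 1))) :
    Real.log 2 / 2 * |β₁ - β₂| ≤
      liminf (fun j : ℤ => ((j : ℝ))⁻¹ * |Real.log (σ₁ j) - Real.log (σ₂ j)|) atTop := by
  obtain ⟨M, hM⟩ := hCψb
  obtain ⟨N₁, hN₁⟩ := h₁b
  obtain ⟨N₂, hN₂⟩ := h₂b
  have hψM : ∀ x, ‖ψhat x‖ ≤ M * |x| ^ α := fun x => by
    rw [hψ, norm_mul, Complex.norm_real, norm_of_nonneg (by positivity)]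
    exact mul_le_mul_of_nonneg_right (hM x) (by positivity)
  have hψ0 : ∀ᶠ x in 𝓝[>] 0, ψhat x ≠ 0 := by
    filter_upwards [nhdsWithin_le_nhds (hCψc.continuousAt.eventually_ne hCψ0), self_mem_nhdsWithin]
      with x hCx hx
    rw [hψ]
    exact mul_ne_zero hCx (Complex.ofReal_ne_zero.2 (rpow_pos_of_pos (abs_pos.2 hx.ne') _).ne')
  have hσ₁lim := tendsto_inv_mul_log_sqrt_integral_norm_sq_comp_zpow_mul hψL2 hψM hψ0
    (by linarith [hβ₁.1]) hβ₁.2.le h₁c (fun x => (abs_of_nonneg (h₁nn x)).trans_le (hN₁ x)) h₁0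
  have hσ₂lim := tendsto_inv_mul_log_sqrt_integral_norm_sq_comp_zpow_mul hψL2 hψM hψ0
    (by linarith [hβ₂.1]) hβ₂.2.le h₂c (fun x => (abs_of_nonneg (h₂nn x)).trans_le (hN₂ x)) h₂0
  simp_rw [← hσ₁, ← hσ₂] at hσ₁lim hσ₂lim
  have hlimit : |-(β₁ * log 2 / 2) - -(β₂ * log 2 / 2)| = log 2 / 2 * |β₁ - β₂| := by
    rw [show -(β₁ * log 2 / 2) - -(β₂ * log 2 / 2) = -(log 2 / 2 * (β₁ - β₂)) by ring, abs_neg,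
      abs_mul, abs_of_pos (half_pos (log_pos one_lt_two))]
  have hlim : Tendsto (fun j : ℤ => ((j : ℝ))⁻¹ * |log (σ₁ j) - log (σ₂ j)|) atTop
      (𝓝 (log 2 / 2 * |β₁ - β₂|)) := by
    rw [← hlimit]
    refine (hσ₁lim.sub hσ₂lim).abs.congr' ?_
    filter_upwards [eventually_gt_atTop 0] with j hj
    rw [← mul_sub, abs_mul, abs_of_pos (inv_pos.2 (Int.cast_pos.2 hj))]
  exact hlim.liminf_eq.ge
end

section
/- For every integer n ≥ 1, 2^{2n} (n!)² ≤ √(4πn) · (2n)!. Equivalently, the central binomial coefficient satisfies binom(2n, n) ≥ 4^n / (2√(πn)). -/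
/-!
Since `(2n)! = binom(2n,n) (n!)²` and `π ≥ 1`, it suffices to show `16^n ≤ 4n binom(2n,n)²`.
This follows by induction from `(n+1) binom(2n+2,n+1) = 2(2n+1) binom(2n,n)`, because
`(2n+1)² ≥ 4n(n+1)`.
-/

open Real

theorem Nat.sixteen_pow_le_four_mul_mul_centralBinom_sq {n : ℕ} (hn : 0 < n) :
    16 ^ n ≤ 4 * n * n.centralBinom ^ 2 := by
  induction n with
  | zero => omega
  | succ n ih =>
    rcases Nat.eq_zero_or_pos n with rfl | hn
    · simp [Nat.centralBinom, Nat.choose]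
    refine Nat.le_of_mul_le_mul_left ?_ (by positivity : 0 < n * (n + 1))
    calc n * (n + 1) * 16 ^ (n + 1) = 4 * (4 * n * (n + 1)) * 16 ^ n := by ring
      _ ≤ 4 * (2 * n + 1) ^ 2 * 16 ^ n := by gcongr; nlinarith
      _ ≤ 4 * (2 * n + 1) ^ 2 * (4 * n * n.centralBinom ^ 2) := by gcongr; exact ih hn
      _ = n * (4 * ((n + 1) * (n + 1).centralBinom) ^ 2) := by
          rw [Nat.succ_mul_centralBinom_succ]; ring
      _ = n * (n + 1) * (4 * (n + 1) * (n + 1).centralBinom ^ 2) := by ring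

theorem Nat.factorial_two_mul_eq_centralBinom_mul (n : ℕ) :
    (2 * n).factorial = n.centralBinom * n.factorial ^ 2 := by
  rw [Nat.centralBinom_eq_two_mul_choose, sq, ← mul_assoc]
  simpa [two_mul] using (Nat.choose_mul_factorial_mul_factorial (Nat.le_add_left n n)).symm

/-- A Stirling-type bound: `2^{2n} (n!)² ≤ √(4πn) (2n)!` for every `n ≥ 1`, equivalently the
central binomial coefficient satisfies `binom(2n,n) ≥ 4^n / (2√(πn))`. -/
theorem stmt10 (n : ℕ) (hn : 1 ≤ n) :
    (2 : ℝ) ^ (2 * n) * (Nat.factorial n : ℝ) ^ 2 ≤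
      Real.sqrt (4 * Real.pi * n) * (Nat.factorial (2 * n) : ℝ) := by
  have hbinom : (16 : ℝ) ^ n ≤ 4 * π * n * n.centralBinom ^ 2 := by
    have h : (16 : ℝ) ^ n ≤ 4 * n * n.centralBinom ^ 2 := by
      exact_mod_cast Nat.sixteen_pow_le_four_mul_mul_centralBinom_sq hn
    nlinarith [Real.pi_gt_three, (by positivity : (0 : ℝ) ≤ n * n.centralBinom ^ 2)]
  rw [← pow_le_pow_iff_left₀ (by positivity) (by positivity) two_ne_zero, mul_pow √_,
    Real.sq_sqrt (by positivity), Nat.factorial_two_mul_eq_centralBinom_mul]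
  calc ((2 : ℝ) ^ (2 * n) * n.factorial ^ 2) ^ 2 = 16 ^ n * (n.factorial ^ 2) ^ 2 := by
        rw [mul_pow, ← pow_mul, show 2 * n * 2 = 4 * n by ring, pow_mul]; norm_num
    _ ≤ 4 * π * n * n.centralBinom ^ 2 * (n.factorial ^ 2) ^ 2 := by gcongr
    _ = 4 * π * n * ((n.centralBinom * n.factorial ^ 2 : ℕ) : ℝ) ^ 2 := by push_cast; ring
end

section
/- For all integers ℓ, ℓ' ≥ 1, Σ_{r=1}^{min(ℓ, ℓ')} (r/ℓ') · √( binom(ℓ, r) · binom(ℓ', r) · binom(ℓ + ℓ' − 2r, ℓ − r) ) ≤ 3^{(ℓ + ℓ')/2}. -/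
/-!
Since `r ≤ ℓ'`, the factor `r / ℓ'` is at most `1`, and
`binom(ℓ + ℓ' - 2r, ℓ - r) ≤ 2^(ℓ - r) 2^(ℓ' - r)`. Each summand is therefore at most
`√(binom(ℓ, r) 2^(ℓ - r)) √(binom(ℓ', r) 2^(ℓ' - r))`, and Cauchy–Schwarz bounds the sum by
`√(∑ binom(ℓ, r) 2^(ℓ - r)) √(∑ binom(ℓ', r) 2^(ℓ' - r)) ≤ √(3^ℓ) √(3^ℓ')` by the binomial theorem.
-/

open Finset Real

lemma Nat.sum_choose_mul_pow_le (x n : ℕ) (s : Finset ℕ) :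
    ∑ r ∈ s, n.choose r * x ^ (n - r) ≤ (1 + x) ^ n := by
  calc ∑ r ∈ s, n.choose r * x ^ (n - r)
      ≤ ∑ r ∈ range (n + 1), n.choose r * x ^ (n - r) := by
        refine sum_le_sum_of_ne_zero fun r _ hr => mem_range_succ_iff.2 ?_
        by_contra! hlt
        simp [Nat.choose_eq_zero_of_lt hlt] at hr
    _ = (1 + x) ^ n := by
        rw [add_pow]
        exact sum_congr rfl fun r _ => by rw [one_pow, one_mul, Nat.cast_id, mul_comm]

lemma Nat.choose_sub_le_two_pow_mul_two_pow {ℓ ℓ' r : ℕ} (hrℓ : r ≤ ℓ) (hrℓ' : r ≤ ℓ') :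
    (ℓ + ℓ' - 2 * r).choose (ℓ - r) ≤ 2 ^ (ℓ - r) * 2 ^ (ℓ' - r) := by
  rw [← pow_add, show ℓ - r + (ℓ' - r) = ℓ + ℓ' - 2 * r by omega]
  exact Nat.choose_le_two_pow _ _

lemma summand_le_sqrt_mul_sqrt {ℓ ℓ' r : ℕ} (hrℓ : r ≤ ℓ) (hrℓ' : r ≤ ℓ') :
    ((r : ℝ) / ℓ') * √((ℓ.choose r : ℝ) * ℓ'.choose r * (ℓ + ℓ' - 2 * r).choose (ℓ - r)) ≤
      √((ℓ.choose r * 2 ^ (ℓ - r) : ℕ)) * √((ℓ'.choose r * 2 ^ (ℓ' - r) : ℕ)) := by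
  have hnat : ℓ.choose r * ℓ'.choose r * (ℓ + ℓ' - 2 * r).choose (ℓ - r) ≤
      ℓ.choose r * 2 ^ (ℓ - r) * (ℓ'.choose r * 2 ^ (ℓ' - r)) :=
    calc _ ≤ ℓ.choose r * ℓ'.choose r * (2 ^ (ℓ - r) * 2 ^ (ℓ' - r)) :=
          Nat.mul_le_mul_left _ (Nat.choose_sub_le_two_pow_mul_two_pow hrℓ hrℓ')
      _ = _ := by ring
  have hfrac : (r : ℝ) / ℓ' ≤ 1 := div_le_one_of_le₀ (by exact_mod_cast hrℓ') (by positivity)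
  rw [← sqrt_mul (Nat.cast_nonneg _)]
  calc _ ≤ 1 * √((ℓ.choose r : ℝ) * ℓ'.choose r * (ℓ + ℓ' - 2 * r).choose (ℓ - r)) :=
        mul_le_mul_of_nonneg_right hfrac (sqrt_nonneg _)
    _ ≤ _ := by
        rw [one_mul]
        exact sqrt_le_sqrt (by exact_mod_cast hnat)

lemma sqrt_pow_mul_sqrt_pow {x : ℝ} (hx : 0 < x) (m n : ℕ) :
    √(x ^ m) * √(x ^ n) = x ^ (((m : ℝ) + n) / 2) := by
  rw [sqrt_eq_rpow, sqrt_eq_rpow, ← rpow_natCast, ← rpow_natCast, ← rpow_mul hx.le,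
    ← rpow_mul hx.le, ← rpow_add hx]
  ring_nf

theorem stmt13_general (ℓ ℓ' : ℕ) :
    ∑ r ∈ Finset.Icc 1 (min ℓ ℓ'),
      ((r : ℝ) / (ℓ' : ℝ)) *
        Real.sqrt ((ℓ.choose r : ℝ) * (ℓ'.choose r : ℝ) *
          ((ℓ + ℓ' - 2 * r).choose (ℓ - r) : ℝ)) ≤
      (3 : ℝ) ^ (((ℓ : ℝ) + (ℓ' : ℝ)) / 2) := by
  set S := Icc 1 (min ℓ ℓ')
  let c : ℕ → ℕ → ℝ := fun n r => ((n.choose r * 2 ^ (n - r) : ℕ) : ℝ)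
  have hsum (n : ℕ) : ∑ r ∈ S, c n r ≤ 3 ^ n := by
    simp only [c]
    exact_mod_cast (Nat.sum_choose_mul_pow_le 2 n S : _ ≤ 3 ^ n)
  calc _ ≤ ∑ r ∈ S, √(c ℓ r) * √(c ℓ' r) := sum_le_sum fun r hr => by
        have hr' := (mem_Icc.1 hr).2
        exact summand_le_sqrt_mul_sqrt (hr'.trans (min_le_left _ _)) (hr'.trans (min_le_right _ _))
    _ ≤ √(∑ r ∈ S, c ℓ r) * √(∑ r ∈ S, c ℓ' r) :=
        sum_sqrt_mul_sqrt_le S (fun _ => Nat.cast_nonneg _) (fun _ => Nat.cast_nonneg _)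
    _ ≤ √(3 ^ ℓ) * √(3 ^ ℓ') := by gcongr <;> exact hsum _
    _ = _ := sqrt_pow_mul_sqrt_pow (by norm_num) ℓ ℓ'

/-- The bound `Θ₂(ℓ, ℓ') ≤ 3^{ℓ/2} 3^{ℓ'/2}` from the proof of Proposition 1:
`∑_{r=1}^{ℓ ∧ ℓ'} (r/ℓ') √(binom(ℓ,r) binom(ℓ',r) binom(ℓ+ℓ'-2r, ℓ-r)) ≤ 3^{(ℓ+ℓ')/2}`. -/
theorem stmt13 (ℓ ℓ' : ℕ) (hℓ : 1 ≤ ℓ) (hℓ' : 1 ≤ ℓ') :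
    ∑ r ∈ Finset.Icc 1 (min ℓ ℓ'),
      ((r : ℝ) / (ℓ' : ℝ)) *
        Real.sqrt ((ℓ.choose r : ℝ) * (ℓ'.choose r : ℝ) *
          ((ℓ + ℓ' - 2 * r).choose (ℓ - r) : ℝ)) ≤
      (3 : ℝ) ^ (((ℓ : ℝ) + (ℓ' : ℝ)) / 2) :=
  stmt13_general ℓ ℓ'
end

section
/- Let d ≥ 1 and let F and N be ℝ^d-valued random vectors. Define the class H₂ of test functions as the set of continuously differentiable h : ℝ^d → ℝ with sup_x |h(x)| ≤ 1, max_{1≤m≤d} sup_x |∂h/∂x_m(x)| ≤ 1, and max_{1≤m≤d} sup_{x≠y} |∂h/∂x_m(x) − ∂h/∂x_m(y)|/‖x−y‖ ≤ 1, and set d_{H₂}(F, N) = sup_{h ∈ H₂} |E[h(F)] − E[h(N)]|. Suppose there is a constant c > 0 such that for all z ∈ ℝ^d and all δ > 0, P(N ∈ Π_{k=1}^d (−∞, z_k + δ]) − P(N ∈ Π_{k=1}^d (−∞, z_k]) ≤ c·δ. Then for every δ > 0, sup_{z ∈ ℝ^d} | P(F ∈ Π_{k=1}^d (−∞, z_k])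 − P(N ∈ Π_{k=1}^d (−∞, z_k]) | ≤ (1 + 4/δ²) · d_{H₂}(F, N) + c·δ. -/
open MeasureTheory ProbabilityTheory

/-- The class `H₂` of test functions on `ℝ^d`: continuously differentiable functions bounded
by `1`, with all partial derivatives bounded by `1` and `1`-Lipschitz. -/
def memH₂ {d : ℕ} (h : EuclideanSpace ℝ (Fin d) → ℝ) : Prop :=
  ContDiff ℝ 1 h ∧ (∀ x, |h x| ≤ 1) ∧
    (∀ (m : Fin d) (x), |fderiv ℝ h x (EuclideanSpace.single m 1)| ≤ 1) ∧
    (∀ (m : Fin d) (x y), |fderiv ℝ h x (EuclideanSpace.single m 1) -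
      fderiv ℝ h y (EuclideanSpace.single m 1)| ≤ ‖x - y‖)

/-- The smooth Wasserstein distance `d_{H₂}` between the laws of two random vectors `F, N`:
the supremum over `h ∈ H₂` of `|E[h(F)] - E[h(N)]|`. -/
noncomputable def dH₂ {Ω : Type*} [MeasureSpace Ω] {d : ℕ}
    (F N : Ω → EuclideanSpace ℝ (Fin d)) : ℝ :=
  sSup {r : ℝ | ∃ h : EuclideanSpace ℝ (Fin d) → ℝ, memH₂ h ∧
    r = |(∫ ω, h (F ω)) - ∫ ω, h (N ω)|}

/-!
Compare the indicator of the orthant `{x ≤ z}` with the bump `h(x) = G(‖(x - z)₊‖²)`, which is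
`1` on `{x ≤ z}` and `0` outside `{x ≤ z + δ}`. The profile `G` solves `G' = -(2/δ²) m` with `m`
chosen so that `∇h(x) = -(4/δ²) m(‖v‖²) v` at `v = (x - z)₊`, and `v ↦ m(‖v‖²) v` is the radial
field with tent profile `r ↦ min r (δ - r)₊`: it has norm at most `δ/2` and is `1`-Lipschitz.
Hence `h / (1 + 4/δ²) ∈ H₂`, so `P(F ≤ z) ≤ E h(F) ≤ E h(N) + (1 + 4/δ²) d_{H₂}(F, N)
≤ P(N ≤ z + δ) + (1 + 4/δ²) d_{H₂}(F, N)`, and the anti-concentration of `N` removes the shift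
`δ`. Exchanging `F` and `N` at the point `z - δ` gives the other inequality.
-/

noncomputable section

namespace OrthantSmoothing

open Real intervalIntegral

lemma norm_smul_sub_smul_le {E : Type*} [NormedAddCommGroup E] [InnerProductSpace ℝ E]
    {a b : ℝ} (ha₀ : 0 ≤ a) (ha₁ : a ≤ 1) (hb₀ : 0 ≤ b) (hb₁ : b ≤ 1) (v w : E)
    (h : |a * ‖v‖ - b * ‖w‖| ≤ |‖v‖ - ‖w‖|) : ‖a • v - b • w‖ ≤ ‖v - w‖ := by
  have hsq : (a * ‖v‖ - b * ‖w‖) ^ 2 ≤ (‖v‖ - ‖w‖) ^ 2 := sq_le_sq.2 h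
  have hcs : inner ℝ v w ≤ ‖v‖ * ‖w‖ := real_inner_le_norm v w
  have hab : a * b ≤ 1 := mul_le_one₀ ha₁ hb₀ hb₁
  refine (pow_le_pow_iff_left₀ (norm_nonneg _) (norm_nonneg _) two_ne_zero).1 ?_
  rw [norm_sub_sq_real, norm_sub_sq_real, norm_smul, norm_smul, real_inner_smul_left,
    real_inner_smul_right, Real.norm_of_nonneg ha₀, Real.norm_of_nonneg hb₀]
  nlinarith [mul_le_mul_of_nonneg_left hcs (sub_nonneg.2 hab)]

section Profile

variable {δ : ℝ}

-- `1` on `t ≤ δ²/4` and `(δ/√t - 1)₊` beyond; clamping `t` at `δ²/4` makes it continuous.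
def weight (δ t : ℝ) : ℝ := max (δ / √(max t (δ ^ 2 / 4)) - 1) 0

lemma sqrt_sq_div_four (hδ : 0 < δ) : √(δ ^ 2 / 4) = δ / 2 := by
  rw [show δ ^ 2 / 4 = (δ / 2) ^ 2 by ring, sqrt_sq (by positivity)]

lemma continuous_weight (hδ : 0 < δ) : Continuous (weight δ) := by
  refine ((continuous_const.div ((continuous_id.max continuous_const).sqrt) fun t => ?_).sub
    continuous_const).max continuous_const
  exact (sqrt_pos.2 (lt_max_of_lt_right (by positivity))).ne'

lemma weight_nonneg (t : ℝ) : 0 ≤ weight δ t := le_max_right _ _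

lemma weight_of_le (hδ : 0 < δ) {t : ℝ} (ht : t ≤ δ ^ 2 / 4) : weight δ t = 1 := by
  rw [weight, max_eq_right ht, sqrt_sq_div_four hδ, div_div_cancel₀ hδ.ne',
    max_eq_left (by norm_num)]
  norm_num

lemma weight_of_ge {t : ℝ} (ht : δ ^ 2 / 4 ≤ t) : weight δ t = max (δ / √t - 1) 0 := by
  rw [weight, max_eq_left ht]

lemma weight_le_one (hδ : 0 < δ) (t : ℝ) : weight δ t ≤ 1 := by
  rcases le_total t (δ ^ 2 / 4) with ht | ht
  · exact (weight_of_le hδ ht).le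
  rw [weight_of_ge ht]
  have : δ / 2 ≤ √t := sqrt_sq_div_four hδ ▸ sqrt_le_sqrt ht
  have : δ / √t ≤ 2 := by rw [div_le_iff₀ (by linarith)]; linarith
  exact max_le (by linarith) zero_le_one

lemma weight_eq_zero (hδ : 0 < δ) {t : ℝ} (ht : δ ^ 2 ≤ t) : weight δ t = 0 := by
  rw [weight_of_ge (by linarith [sq_nonneg δ])]
  have : δ ≤ √t := sqrt_sq hδ.le ▸ sqrt_le_sqrt ht
  have : δ / √t ≤ 1 := by rw [div_le_one (by linarith)]; exact this
  exact max_eq_right (by linarith)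

lemma mul_weight_sq (hδ : 0 < δ) {r : ℝ} (hr : 0 ≤ r) :
    r * weight δ (r ^ 2) = min r (max (δ - r) 0) := by
  rcases le_total r (δ / 2) with h | h
  · rw [weight_of_le hδ (by nlinarith), mul_one, min_eq_left (le_max_of_le_left (by linarith))]
  · have hr : 0 < r := by linarith
    rw [weight_of_ge (by nlinarith), sqrt_sq hr.le, mul_max_of_nonneg _ _ hr.le, mul_zero,
      mul_sub, mul_div_cancel₀ _ hr.ne', mul_one, min_eq_right (max_le (by linarith) hr.le)]

lemma integral_weight_sq (hδ : 0 < δ) : ∫ t in (0 : ℝ)..δ ^ 2, weight δ t = δ ^ 2 / 2 := by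
  have hint : ∀ a b, IntervalIntegrable (weight δ) volume a b :=
    fun a b => (continuous_weight hδ).intervalIntegrable a b
  have hle : δ ^ 2 / 4 ≤ δ ^ 2 := by linarith [sq_nonneg δ]
  have hpos : 0 < δ ^ 2 / 4 := by positivity
  have first : ∫ t in (0 : ℝ)..δ ^ 2 / 4, weight δ t = δ ^ 2 / 4 := by
    rw [integral_congr fun t ht => weight_of_le hδ (Set.uIcc_of_le hpos.le ▸ ht).2]
    simp
  have second : ∫ t in δ ^ 2 / 4..δ ^ 2, weight δ t = δ ^ 2 / 4 := by
    have hsqrt : ∀ t ∈ Set.uIcc (δ ^ 2 / 4) (δ ^ 2), 0 < √t := fun t ht =>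
      sqrt_pos.2 (hpos.trans_le (Set.uIcc_of_le hle ▸ ht).1)
    have hweight : ∀ t ∈ Set.uIcc (δ ^ 2 / 4) (δ ^ 2), weight δ t = δ / √t - 1 := by
      intro t ht
      rw [Set.uIcc_of_le hle] at ht
      have : √t ≤ δ := sqrt_sq hδ.le ▸ sqrt_le_sqrt ht.2
      rw [weight_of_ge ht.1, max_eq_left]
      rw [sub_nonneg, le_div_iff₀ (sqrt_pos.2 (hpos.trans_le ht.1)), one_mul]
      exact this
    have hderiv : ∀ t ∈ Set.uIcc (δ ^ 2 / 4) (δ ^ 2),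
        HasDerivAt (fun t => 2 * δ * √t - t) (δ / √t - 1) t := by
      intro t ht
      have ht0 : t ≠ 0 := (sqrt_pos.1 (hsqrt t ht)).ne'
      refine (((hasDerivAt_sqrt ht0).const_mul (2 * δ)).sub (hasDerivAt_id' t)).congr_deriv ?_
      field_simp
    rw [integral_congr hweight, integral_eq_sub_of_hasDerivAt hderiv
      (ContinuousOn.intervalIntegrable fun t ht =>
        ((continuousAt_const.div continuous_sqrt.continuousAt (hsqrt t ht).ne').sub
          continuousAt_const).continuousWithinAt), sqrt_sq hδ.le, sqrt_sq_div_four hδ]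
    ring
  rw [← integral_add_adjacent_intervals (hint 0 (δ ^ 2 / 4)) (hint _ (δ ^ 2)), first, second]
  ring

lemma integral_weight_of_sq_le (hδ : 0 < δ) {t : ℝ} (ht : δ ^ 2 ≤ t) :
    ∫ τ in (0 : ℝ)..t, weight δ τ = δ ^ 2 / 2 := by
  have hint : ∀ a b, IntervalIntegrable (weight δ) volume a b :=
    fun a b => (continuous_weight hδ).intervalIntegrable a b
  rw [← integral_add_adjacent_intervals (hint 0 (δ ^ 2)) (hint _ t), integral_weight_sq hδ,
    integral_congr fun τ hτ => weight_eq_zero hδ (Set.uIcc_of_le ht ▸ hτ).1]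
  simp

lemma integral_weight_mem_Icc (hδ : 0 < δ) {t : ℝ} (ht : 0 ≤ t) :
    ∫ τ in (0 : ℝ)..t, weight δ τ ∈ Set.Icc 0 (δ ^ 2 / 2) := by
  refine ⟨integral_nonneg ht fun τ _ => weight_nonneg τ, ?_⟩
  rw [← integral_weight_of_sq_le hδ (le_max_right t (δ ^ 2))]
  exact integral_mono_interval le_rfl ht (le_max_left _ _)
    (.of_forall weight_nonneg) ((continuous_weight hδ).intervalIntegrable _ _)

def profile (δ t : ℝ) : ℝ := 1 - 2 / δ ^ 2 * ∫ τ in (0 : ℝ)..t, weight δ τ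

lemma hasDerivAt_profile (hδ : 0 < δ) (t : ℝ) :
    HasDerivAt (profile δ) (-(2 / δ ^ 2) * weight δ t) t := by
  refine ((((continuous_weight hδ).integral_hasStrictDerivAt 0 t).hasDerivAt.const_mul
    (2 / δ ^ 2)).const_sub 1).congr_deriv ?_
  ring

lemma profile_zero : profile δ 0 = 1 := by simp [profile]

lemma profile_of_sq_le (hδ : 0 < δ) {t : ℝ} (ht : δ ^ 2 ≤ t) : profile δ t = 0 := by
  rw [profile, integral_weight_of_sq_le hδ ht]
  field_simp
  norm_num

lemma profile_mem_Icc (hδ : 0 < δ) {t : ℝ} (ht : 0 ≤ t) : profile δ t ∈ Set.Icc 0 1 := by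
  obtain ⟨h0, h1⟩ := integral_weight_mem_Icc hδ ht
  have hc : 0 < 2 / δ ^ 2 := by positivity
  have : 2 / δ ^ 2 * (δ ^ 2 / 2) = 1 := by field_simp
  rw [profile]
  constructor <;> nlinarith

lemma abs_tent_sub_le (δ r s : ℝ) :
    |min r (max (δ - r) 0) - min s (max (δ - s) 0)| ≤ |r - s| := by
  refine (abs_min_sub_min_le_max _ _ _ _).trans (max_le le_rfl ?_)
  refine (abs_max_sub_max_le_abs _ _ _).trans ?_
  rw [sub_sub_sub_cancel_left, abs_sub_comm]

variable {E : Type*} [NormedAddCommGroup E] [InnerProductSpace ℝ E]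

lemma norm_weight_smul_le (hδ : 0 < δ) (v : E) : ‖weight δ (‖v‖ ^ 2) • v‖ ≤ δ / 2 := by
  rw [norm_smul, norm_of_nonneg (weight_nonneg _), mul_comm, mul_weight_sq hδ (norm_nonneg v)]
  rcases le_total ‖v‖ (δ / 2) with h | h
  · exact (min_le_left _ _).trans h
  · exact (min_le_right _ _).trans (max_le (by linarith) (by linarith))

lemma norm_weight_smul_sub_weight_smul_le (hδ : 0 < δ) (v w : E) :
    ‖weight δ (‖v‖ ^ 2) • v - weight δ (‖w‖ ^ 2) • w‖ ≤ ‖v - w‖ := by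
  refine norm_smul_sub_smul_le (weight_nonneg _) (weight_le_one hδ _) (weight_nonneg _)
    (weight_le_one hδ _) v w ?_
  rw [mul_comm, mul_weight_sq hδ (norm_nonneg v), mul_comm, mul_weight_sq hδ (norm_nonneg w)]
  exact abs_tent_sub_le δ _ _

end Profile

lemma hasDerivAt_max_zero_sq (t : ℝ) : HasDerivAt (fun s => max s 0 ^ 2) (2 * max t 0) t := by
  refine hasDerivAt_of_hasDerivAt_of_ne' (f := fun s => max s 0 ^ 2) (g := fun t => 2 * max t 0)
    (x := 0) (fun y hy => ?_) (by fun_prop) (by fun_prop) t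
  rcases hy.lt_or_gt with h | h
  · rw [max_eq_right h.le, mul_zero]
    refine (hasDerivAt_const y 0).congr_of_eventuallyEq ?_
    filter_upwards [eventually_lt_nhds h] with s hs
    rw [max_eq_right hs.le]
    norm_num
  · rw [max_eq_left h.le]
    refine (hasDerivAt_pow 2 y).congr_of_eventuallyEq ?_ |>.congr_deriv (by ring)
    filter_upwards [eventually_gt_nhds h] with s hs
    rw [max_eq_left hs.le]

section Orthant

variable {d : ℕ}

local notation "E" => EuclideanSpace ℝ (Fin d)

variable {δ : ℝ}

lemma memH₂_inv_mul_of_hasGradientAt {h : E → ℝ} {g : E → E} {M : ℝ} (hM : 0 < M)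
    (hh : ∀ x, HasGradientAt h (g x) x) (hbound : ∀ x, |h x| ≤ M) (hg : ∀ x, ‖g x‖ ≤ M)
    (hglip : ∀ x y, ‖g x - g y‖ ≤ M * ‖x - y‖) : memH₂ (fun x => M⁻¹ * h x) := by
  have hf : ∀ x,
      HasFDerivAt (fun x => M⁻¹ * h x) (M⁻¹ • InnerProductSpace.toDual ℝ E (g x)) x :=
    fun x => (hh x).hasFDerivAt.const_mul _
  have hfd : ∀ x v, fderiv ℝ (fun x => M⁻¹ * h x) x v = M⁻¹ * inner ℝ (g x) v := fun x v => by
    rw [(hf x).fderiv]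
    rfl
  have hcont : Continuous g := (LipschitzWith.of_dist_le_mul (K := ⟨M, hM.le⟩) fun x y => by
    rw [dist_eq_norm, dist_eq_norm]
    exact hglip x y).continuous
  have hcoord : ∀ (v : E) (m : Fin d), |inner ℝ v (EuclideanSpace.single m 1)| ≤ ‖v‖ :=
    fun v m => by simpa [EuclideanSpace.inner_single_right] using PiLp.norm_apply_le v m
  have hM' : 0 < M⁻¹ := inv_pos.2 hM
  refine ⟨contDiff_one_iff_fderiv.2 ⟨fun x => (hf x).differentiableAt, ?_⟩, fun x => ?_,
    fun m x => ?_, fun m x y => ?_⟩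
  · rw [funext fun x => (hf x).fderiv]
    exact ((InnerProductSpace.toDual ℝ E).continuous.comp hcont).const_smul M⁻¹
  · rw [abs_mul, abs_of_pos hM']
    exact inv_mul_le_one_of_le₀ (hbound x) hM.le
  · rw [hfd, abs_mul, abs_of_pos hM']
    exact inv_mul_le_one_of_le₀ ((hcoord _ m).trans (hg x)) hM.le
  · rw [hfd, hfd, ← mul_sub, ← inner_sub_left, abs_mul, abs_of_pos hM', inv_mul_le_iff₀ hM]
    exact (hcoord _ m).trans (hglip x y)

def excess (z : Fin d → ℝ) (x : E) : E := WithLp.toLp 2 fun k => max (x k - z k) 0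

lemma norm_excess_sub_excess_le (z : Fin d → ℝ) (x y : E) :
    ‖excess z x - excess z y‖ ≤ ‖x - y‖ := by
  rw [EuclideanSpace.norm_eq, EuclideanSpace.norm_eq]
  refine sqrt_le_sqrt (Finset.sum_le_sum fun k _ => pow_le_pow_left₀ (norm_nonneg _) ?_ 2)
  simp only [excess, PiLp.sub_apply, norm_eq_abs]
  simpa only [sub_sub_sub_cancel_right] using abs_max_sub_max_le_abs (x k - z k) (y k - z k) 0

lemma norm_excess_sq (z : Fin d → ℝ) (x : E) :
    ‖excess z x‖ ^ 2 = ∑ k, max (x k - z k) 0 ^ 2 := by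
  simp [EuclideanSpace.norm_sq_eq, excess, sq_abs]

lemma hasFDerivAt_norm_excess_sq (z : Fin d → ℝ) (x : E) :
    HasFDerivAt (fun x => ‖excess z x‖ ^ 2) (2 • innerSL ℝ (excess z x)) x := by
  simp_rw [norm_excess_sq]
  refine (HasFDerivAt.fun_sum (u := Finset.univ) fun k _ =>
    (hasDerivAt_max_zero_sq (x k - z k)).comp_hasFDerivAt x
      ((EuclideanSpace.proj k : E →L[ℝ] ℝ).hasFDerivAt.sub_const (z k))).congr_fderiv ?_
  ext v
  simp [PiLp.inner_apply, excess, Finset.mul_sum, mul_comm, mul_assoc]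

lemma norm_excess_sq_eq_zero {z : Fin d → ℝ} {x : E} (hx : ∀ k, x k ≤ z k) :
    ‖excess z x‖ ^ 2 = 0 := by
  rw [norm_excess_sq]
  exact Finset.sum_eq_zero fun k _ => by rw [max_eq_right (sub_nonpos.2 (hx k))]; norm_num

lemma sq_le_norm_excess_sq (hδ : 0 ≤ δ) {z : Fin d → ℝ} {x : E}
    (hx : ¬ ∀ k, x k ≤ z k + δ) : δ ^ 2 ≤ ‖excess z x‖ ^ 2 := by
  obtain ⟨j, hj⟩ := not_forall.1 hx
  rw [norm_excess_sq]
  calc δ ^ 2 ≤ max (x j - z j) 0 ^ 2 :=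
        pow_le_pow_left₀ hδ (le_max_of_le_left (by linarith [not_le.1 hj])) 2
    _ ≤ ∑ k, max (x k - z k) 0 ^ 2 :=
        Finset.single_le_sum (f := fun k => max (x k - z k) 0 ^ 2) (fun k _ => sq_nonneg _)
          (Finset.mem_univ j)

def orthantBump (δ : ℝ) (z : Fin d → ℝ) (x : E) : ℝ := profile δ (‖excess z x‖ ^ 2)

lemma hasGradientAt_orthantBump (hδ : 0 < δ) (z : Fin d → ℝ) (x : E) :
    HasGradientAt (orthantBump δ z)
      (-(4 / δ ^ 2) • weight δ (‖excess z x‖ ^ 2) • excess z x) x := by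
  refine hasGradientAt_iff_hasFDerivAt.2 (((hasDerivAt_profile hδ _).comp_hasFDerivAt x
    (hasFDerivAt_norm_excess_sq z x)).congr_fderiv ?_)
  ext v
  simp only [InnerProductSpace.toDual_apply_apply, FunLike.coe_smul, Pi.smul_apply,
    innerSL_apply_apply, real_inner_smul_left, smul_eq_mul]
  ring

lemma orthantBump_mem_Icc (hδ : 0 < δ) (z : Fin d → ℝ) (x : E) :
    orthantBump δ z x ∈ Set.Icc 0 1 :=
  profile_mem_Icc hδ (sq_nonneg _)

lemma orthantBump_of_le {z : Fin d → ℝ} {x : E} (hx : ∀ k, x k ≤ z k) :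
    orthantBump δ z x = 1 := by
  rw [orthantBump, norm_excess_sq_eq_zero hx, profile_zero]

lemma orthantBump_of_not_le (hδ : 0 < δ) {z : Fin d → ℝ} {x : E}
    (hx : ¬ ∀ k, x k ≤ z k + δ) : orthantBump δ z x = 0 :=
  profile_of_sq_le hδ (sq_le_norm_excess_sq hδ.le hx)

lemma memH₂_orthantBump (hδ : 0 < δ) (z : Fin d → ℝ) :
    memH₂ (fun x => (1 + 4 / δ ^ 2)⁻¹ * orthantBump δ z x) := by
  have h4 : 0 < 4 / δ ^ 2 := by positivity
  refine memH₂_inv_mul_of_hasGradientAt (by positivity) (hasGradientAt_orthantBump hδ z)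
    (fun x => ?_) (fun x => ?_) (fun x y => ?_)
  · obtain ⟨h0, h1⟩ := orthantBump_mem_Icc hδ z x
    rw [abs_of_nonneg h0]
    linarith
  · rw [norm_smul, norm_neg, norm_of_nonneg h4.le]
    have h2 : 2 / δ ≤ 1 + 4 / δ ^ 2 := by
      have : 4 / δ ^ 2 = (2 / δ) ^ 2 := by ring
      nlinarith [sq_nonneg (1 - 2 / δ)]
    calc 4 / δ ^ 2 * ‖weight δ (‖excess z x‖ ^ 2) • excess z x‖ ≤ 4 / δ ^ 2 * (δ / 2) :=
          mul_le_mul_of_nonneg_left (norm_weight_smul_le hδ _) h4.le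
      _ = 2 / δ := by field_simp; ring
      _ ≤ 1 + 4 / δ ^ 2 := h2
  · rw [← smul_sub, norm_smul, norm_neg, norm_of_nonneg h4.le]
    calc 4 / δ ^ 2 * ‖weight δ (‖excess z x‖ ^ 2) • excess z x -
          weight δ (‖excess z y‖ ^ 2) • excess z y‖
        ≤ 4 / δ ^ 2 * ‖x - y‖ := mul_le_mul_of_nonneg_left
          ((norm_weight_smul_sub_weight_smul_le hδ _ _).trans
            (norm_excess_sub_excess_le z x y)) h4.le
      _ ≤ (1 + 4 / δ ^ 2) * ‖x - y‖ := by nlinarith [norm_nonneg (x - y)]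

end Orthant

section Probability

variable {Ω : Type*} [MeasureSpace Ω] {d : ℕ}

local notation "E" => EuclideanSpace ℝ (Fin d)

lemma dH₂_comm (F N : Ω → E) : dH₂ F N = dH₂ N F := by
  unfold dH₂
  congr 1
  ext r
  exact exists_congr fun h => and_congr_right fun _ => by rw [abs_sub_comm]

lemma abs_integral_sub_le_dH₂ [IsFiniteMeasure (ℙ : Measure Ω)] (F N : Ω → E) {h : E → ℝ}
    (hh : memH₂ h) : |(∫ ω, h (F ω)) - ∫ ω, h (N ω)| ≤ dH₂ F N := by
  refine le_csSup ⟨2 * (ℙ : Measure Ω).real Set.univ, ?_⟩ ⟨h, hh, rfl⟩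
  rintro r ⟨g, hg, rfl⟩
  have hbound : ∀ X : Ω → E, |∫ ω, g (X ω)| ≤ (ℙ : Measure Ω).real Set.univ := fun X => by
    simpa using norm_integral_le_of_norm_le_const
      (.of_forall fun ω => (norm_eq_abs _).trans_le (hg.2.1 (X ω)))
  linarith [abs_sub (∫ ω, g (F ω)) (∫ ω, g (N ω)), hbound F, hbound N]

lemma measurableSet_forall_le {X : Ω → E} (hX : Measurable X) (z : Fin d → ℝ) :
    MeasurableSet {ω | ∀ k, X ω k ≤ z k} := by
  simp only [Set.ofPred_forall]
  exact MeasurableSet.iInter fun k => measurableSet_le (by fun_prop) measurable_const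

variable [IsProbabilityMeasure (ℙ : Measure Ω)]

lemma measure_forall_le_le_add_dH₂ {δ : ℝ} (hδ : 0 < δ) {X Y : Ω → E} (hX : Measurable X)
    (hY : Measurable Y) (z : Fin d → ℝ) :
    (ℙ {ω | ∀ k, X ω k ≤ z k}).toReal ≤
      (ℙ {ω | ∀ k, Y ω k ≤ z k + δ}).toReal + (1 + 4 / δ ^ 2) * dH₂ X Y := by
  have hcont : Continuous (orthantBump δ z) :=
    continuous_iff_continuousAt.2 fun x => (hasGradientAt_orthantBump hδ z x).continuousAt
  have hint : ∀ V : Ω → E, Measurable V → Integrable (fun ω => orthantBump δ z (V ω)) := by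
    intro V hV
    refine .of_bound (hcont.measurable.comp hV).aestronglyMeasurable 1 (.of_forall fun ω => ?_)
    obtain ⟨h0, h1⟩ := orthantBump_mem_Icc hδ z (V ω)
    rwa [norm_of_nonneg h0]
  have lower : (ℙ {ω | ∀ k, X ω k ≤ z k}).toReal ≤ ∫ ω, orthantBump δ z (X ω) :=
    calc (ℙ {ω | ∀ k, X ω k ≤ z k}).toReal
        ≤ (ℙ : Measure Ω).real {ω | 1 ≤ orthantBump δ z (X ω)} :=
          measureReal_mono fun ω hω => (orthantBump_of_le hω).ge
      _ ≤ ∫ ω, orthantBump δ z (X ω) := by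
          simpa using mul_meas_ge_le_integral_of_nonneg
            (.of_forall fun ω => (orthantBump_mem_Icc hδ z (X ω)).1) (hint X hX) 1
  have upper : ∫ ω, orthantBump δ z (Y ω) ≤ (ℙ {ω | ∀ k, Y ω k ≤ z k + δ}).toReal := by
    have hB := measurableSet_forall_le hY (fun k => z k + δ)
    rw [← measureReal_def, ← integral_indicator_one hB]
    refine integral_mono (hint Y hY) ((integrable_const 1).indicator hB) fun ω => ?_
    by_cases hω : ω ∈ {ω | ∀ k, Y ω k ≤ z k + δ}
    · simpa [hω] using (orthantBump_mem_Icc hδ z (Y ω)).2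
    · simp [hω, orthantBump_of_not_le hδ hω]
  have middle : (∫ ω, orthantBump δ z (X ω)) - ∫ ω, orthantBump δ z (Y ω) ≤
      (1 + 4 / δ ^ 2) * dH₂ X Y := by
    have := abs_integral_sub_le_dH₂ X Y (memH₂_orthantBump hδ z)
    rw [MeasureTheory.integral_const_mul, MeasureTheory.integral_const_mul, ← mul_sub, abs_mul,
      abs_inv, abs_of_pos (by positivity), inv_mul_le_iff₀ (by positivity)] at this
    exact (le_abs_self _).trans this
  linarith

end Probability

end OrthantSmoothing

theorem stmt16_general {Ω : Type*} [MeasureSpace Ω] [IsProbabilityMeasure (ℙ : Measure Ω)]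
    (d : ℕ) (F N : Ω → EuclideanSpace ℝ (Fin d))
    (hF : Measurable F) (hN : Measurable N) (c : ℝ)
    (hanti : ∀ (z : Fin d → ℝ) (δ : ℝ), 0 < δ →
      (ℙ {ω | ∀ k : Fin d, N ω k ≤ z k + δ}).toReal -
        (ℙ {ω | ∀ k : Fin d, N ω k ≤ z k}).toReal ≤ c * δ) :
    ∀ δ : ℝ, 0 < δ → ∀ z : Fin d → ℝ,
      |(ℙ {ω | ∀ k : Fin d, F ω k ≤ z k}).toReal -
        (ℙ {ω | ∀ k : Fin d, N ω k ≤ z k}).toReal| ≤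
      (1 + 4 / δ ^ 2) * dH₂ F N + c * δ := by
  intro δ hδ z
  have hF_le := OrthantSmoothing.measure_forall_le_le_add_dH₂ hδ hF hN z
  have hN_le := OrthantSmoothing.measure_forall_le_le_add_dH₂ hδ hN hF (fun k => z k - δ)
  have hN_anti := hanti z δ hδ
  have hN_anti' := hanti (fun k => z k - δ) δ hδ
  simp only [sub_add_cancel] at hN_le hN_anti'
  rw [OrthantSmoothing.dH₂_comm] at hN_le
  rw [abs_sub_le_iff]
  constructor <;> linarith

/-- From the proof of Corollary 2 of the paper: if the law of `N` satisfies an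
anti-concentration inequality with constant `c` on lower-left orthants, then for every
`δ > 0` the Kolmogorov distance between `F` and `N` is bounded by
`(1 + 4/δ²) d_{H₂}(F, N) + cδ`. -/
theorem stmt16 {Ω : Type*} [MeasureSpace Ω] [IsProbabilityMeasure (ℙ : Measure Ω)]
    (d : ℕ) (hd : 1 ≤ d) (F N : Ω → EuclideanSpace ℝ (Fin d))
    (hF : Measurable F) (hN : Measurable N) (c : ℝ) (hc : 0 < c)
    (hanti : ∀ (z : Fin d → ℝ) (δ : ℝ), 0 < δ →
      (ℙ {ω | ∀ k : Fin d, N ω k ≤ z k + δ}).toReal -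
        (ℙ {ω | ∀ k : Fin d, N ω k ≤ z k}).toReal ≤ c * δ) :
    ∀ δ : ℝ, 0 < δ → ∀ z : Fin d → ℝ,
      |(ℙ {ω | ∀ k : Fin d, F ω k ≤ z k}).toReal -
        (ℙ {ω | ∀ k : Fin d, N ω k ≤ z k}).toReal| ≤
      (1 + 4 / δ ^ 2) * dH₂ F N + c * δ :=
  stmt16_general d F N hF hN c hanti
end
end
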